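/- arXiv:2405.11946 — 5 statements merged into one kernel-verified Lean document; each statement's English description precedes it below -/
import Mathlib

section
/- The sun graph S(n; λ_1,…,λ_n) has a perfect matching (respectively, an almost perfect matching) if and only if the subgraph induced on the set of vertices {v_i : λ_i is even}, i.e., on the beginnings of the rays of even length, has a perfect matching (respectively, an almost perfect matching). -/
noncomputable section

open SimpleGraph

/-- The chromatic symmetric function of a finite simple graph, as a formal power
series in countably many commuting variables `x_0, x_1, x_2, …`: the coefficient of the
monomial `∏ i, x_i ^ d i` is the number of proper colourings `κ : V → ℕ` in which colour `i`
is used exactly `d i` times. -/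
def csf {V : Type} [Fintype V] (G : SimpleGraph V) : MvPowerSeries ℕ ℚ :=
  fun d => (Nat.card {κ : V → ℕ //
      (∀ u v : V, G.Adj u v → κ u ≠ κ v) ∧
      ∀ i : ℕ, Nat.card {v : V // κ v = i} = d i} : ℚ)

/-- The elementary symmetric function `e_k` as a formal power series. -/
def esym (k : ℕ) : MvPowerSeries ℕ ℚ :=
  fun d => if (∀ i ∈ d.support, d i = 1) ∧ (d.sum fun _ v => v) = k then 1 else 0

/-- `e_λ` for a partition `λ` given as a multiset of parts. -/
def esymM (μ : Multiset ℕ) : MvPowerSeries ℕ ℚ :=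
  (μ.map esym).prod

/-- A symmetric function is `e`-positive if it is a finite nonnegative linear combination
of the elementary symmetric functions `e_λ`, `λ` a partition (all parts positive). -/
def EPositive (f : MvPowerSeries ℕ ℚ) : Prop :=
  ∃ c : Multiset ℕ →₀ ℚ, (∀ μ, 0 ≤ c μ) ∧ (∀ μ ∈ c.support, 0 ∉ μ) ∧
    f = c.sum fun μ a => a • esymM μ

/-- The path `P_k` on `k` vertices. -/
def pathG (k : ℕ) : SimpleGraph (Fin k) :=
  SimpleGraph.fromRel (fun i j => (j : ℕ) = (i : ℕ) + 1)

/-- The cycle `C_m` on `m` vertices (for `m = 2` this is a single edge, i.e. `P_2`). -/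
def cycleG (m : ℕ) : SimpleGraph (Fin m) :=
  SimpleGraph.fromRel (fun i j => (j : ℕ) = ((i : ℕ) + 1) % m)

/-- Auxiliary relation for sun graphs: body relation on `Fin n`, plus rays
`P_{lam i}` attached at vertex `i`, the leaf `⟨i,0⟩` of ray `i` being joined to `i`. -/
def sunRel (n : ℕ) (lam : Fin n → ℕ) (body : Fin n → Fin n → Prop) :
    (Fin n ⊕ ((i : Fin n) × Fin (lam i))) → (Fin n ⊕ ((i : Fin n) × Fin (lam i))) → Prop
  | Sum.inl i, Sum.inl i' => body i i'
  | Sum.inl i, Sum.inr p => p.1 = i ∧ (p.2 : ℕ) = 0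
  | Sum.inr p, Sum.inr q => p.1 = q.1 ∧ (q.2 : ℕ) = (p.2 : ℕ) + 1
  | _, _ => False

/-- The sun graph `S(n; λ_1, …, λ_n)`: a cycle `C_n` with a path `P_{λ_i}` (a *ray*)
joined by an edge to the `i`-th cycle vertex, for each `i`. -/
def sunGraph (n : ℕ) (lam : Fin n → ℕ) :
    SimpleGraph (Fin n ⊕ ((i : Fin n) × Fin (lam i))) :=
  SimpleGraph.fromRel (sunRel n lam (fun i i' => (i' : ℕ) = ((i : ℕ) + 1) % n))

/-- The complete sun graph `S̄(n; λ_1, …, λ_n)`: as `sunGraph`, but with complete body `K_n`. -/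
def completeSunGraph (n : ℕ) (lam : Fin n → ℕ) :
    SimpleGraph (Fin n ⊕ ((i : Fin n) × Fin (lam i))) :=
  SimpleGraph.fromRel (sunRel n lam (fun i i' => i ≠ i'))

/-- The spider `S(μ_1, …, μ_d)`: `d` paths (legs) `P_{μ_i}`, each joined at a leaf to a
common centre vertex. -/
def spiderGraph (d : ℕ) (mu : Fin d → ℕ) :
    SimpleGraph (Unit ⊕ ((i : Fin d) × Fin (mu i))) :=
  SimpleGraph.fromRel (fun a b => match a, b with
    | Sum.inl _, Sum.inr p => (p.2 : ℕ) = 0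
    | Sum.inr p, Sum.inr q => p.1 = q.1 ∧ (q.2 : ℕ) = (p.2 : ℕ) + 1
    | _, _ => False)

/-- The graph obtained from a body graph `H` on `Fin n` by joining each body vertex `i`
by an edge to a chosen vertex `u i` of a graph `Gs i`. -/
def attachGraph {n : ℕ} {Vs : Fin n → Type} (H : SimpleGraph (Fin n))
    (Gs : ∀ i, SimpleGraph (Vs i)) (u : ∀ i, Vs i) :
    SimpleGraph (Fin n ⊕ ((i : Fin n) × Vs i)) :=
  SimpleGraph.fromRel (fun a b => match a, b with
    | Sum.inl i, Sum.inl i' => H.Adj i i'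
    | Sum.inl i, Sum.inr p => p.1 = i ∧ p.2 = u p.1
    | Sum.inr p, Sum.inr q => ∃ h : p.1 = q.1, (Gs q.1).Adj (h ▸ p.2) q.2
    | _, _ => False)

/-- `G` has a connected partition of type `μ`: a partition of the vertex set all of whose
blocks induce connected subgraphs, the multiset of block sizes being `μ`. -/
def HasConnectedPartition {V : Type} [Fintype V] [DecidableEq V]
    (G : SimpleGraph V) (μ : Multiset ℕ) : Prop :=
  ∃ P : Finpartition (Finset.univ : Finset V),
    (∀ p ∈ P.parts, (G.induce (↑p : Set V)).Connected) ∧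
      P.parts.val.map Finset.card = μ

/-- `G` has a perfect matching: a partition of `V(G)` into pairs of adjacent vertices. -/
def HasPerfectMatching {V : Type} (G : SimpleGraph V) : Prop :=
  ∃ M : G.Subgraph, M.IsPerfectMatching

/-- `G` has an almost perfect matching: a partition of `V(G)` into pairs of adjacent
vertices together with one singleton. -/
def HasAlmostPerfectMatching {V : Type} (G : SimpleGraph V) : Prop :=
  ∃ M : G.Subgraph, M.IsMatching ∧ ∃ v : V, M.verts = {v}ᶜ

/-- The tadpole graph `T_{m,l}`: the cycle `C_m` (vertices `0, …, m-1`, consecutive edges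
plus the chord `{0, m-1}`) with a path on `l` further vertices attached by an edge at
vertex `m-1`.  For `l = 0` this is just `C_m`. -/
def tadpole (m l : ℕ) : SimpleGraph (Fin (m + l)) :=
  SimpleGraph.fromRel (fun i j =>
    (j : ℕ) = (i : ℕ) + 1 ∨ ((i : ℕ) = 0 ∧ (j : ℕ) = m - 1))

/-- Dumbbell with path-parameter `t = l + 1 ≥ 0`: vertices `0, …, m-1` form the cycle `C_m`
(consecutive edges plus chord `{0, m-1}`), vertices `m+t-1, …, m+n+t-2` form the cycle `C_n`
(consecutive edges plus chord `{m+t-1, m+n+t-2}`), and the vertices in between form the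
connecting path; for `t = 0` (i.e. `l = -1`) the two cycles share the vertex `m-1`. -/
def dumbbellAux (m n t : ℕ) : SimpleGraph (Fin (m + n + t - 1)) :=
  SimpleGraph.fromRel (fun i j =>
    (j : ℕ) = (i : ℕ) + 1
      ∨ ((i : ℕ) = 0 ∧ (j : ℕ) = m - 1)
      ∨ ((i : ℕ) = m + t - 1 ∧ (j : ℕ) = m + n + t - 2))

/-- The dumbbell graph `D(m, l, n)` for `l ≥ -1`: cycles `C_m` and `C_n` joined by a path
on `l` vertices (for `l = 1` a single joining vertex, for `l = 0` a joining edge, and for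
`l = -1` the two cycles share a vertex). -/
def dumbbell (m n : ℕ) (l : ℤ) : SimpleGraph (Fin (m + n + (l + 1).toNat - 1)) :=
  dumbbellAux m n (l + 1).toNat

end

/-!
Give every vertex of the sun two coordinates: its ray and its depth (`v_i` has depth `0`, the
`j`-th vertex of ray `i` depth `j + 1`). A vertex of positive depth has neighbours only one level
up and one level down its own ray, so a matching that covers a stretch of a ray ending in a vertex
not matched upwards pairs that stretch off from the top down. Hence the beginning `v_i` of a
fully covered ray is matched into it exactly when `λ_i` is odd, and the beginning of a ray missing
one vertex exactly when `λ_i` is even. So a perfect (almost perfect) matching of the sun restricts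
to one of the beginnings of even rays, and conversely such a matching extends to the sun by pairing
every ray off from its tip.
-/

namespace SimpleGraph

variable {V : Type} {G : SimpleGraph V} {S : Set V}

def Subgraph.toInduce (M : G.Subgraph) (S : Set V) : (G.induce S).Subgraph where
  verts := {a | ∃ b : S, M.Adj a b}
  Adj a b := M.Adj a b
  adj_sub h := M.adj_sub h
  edge_vert h := ⟨_, h⟩
  symm := ⟨fun _ _ h => M.adj_symm h⟩

theorem Subgraph.IsMatching.toInduce {M : G.Subgraph} (hM : M.IsMatching) :
    (M.toInduce S).IsMatching := by
  rintro a ⟨b, hab⟩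
  exact ⟨b, hab, fun c hac => Subtype.ext (hM.eq_of_adj_left hac hab)⟩

theorem hasPerfectMatching_induce_of_isMatching {M : G.Subgraph} (hM : M.IsMatching)
    (h : ∀ a ∈ S, ∃ b ∈ S, M.Adj a b) : HasPerfectMatching (G.induce S) := by
  refine ⟨M.toInduce S, hM.toInduce, fun a => ?_⟩
  obtain ⟨b, hb, hab⟩ := h a a.2
  exact ⟨⟨b, hb⟩, hab⟩

theorem hasAlmostPerfectMatching_induce_of_isMatching {M : G.Subgraph} (hM : M.IsMatching)
    {s : V} (hsS : s ∈ S) (hs : ∀ b ∈ S, ¬ M.Adj s b)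
    (h : ∀ a ∈ S, a ≠ s → ∃ b ∈ S, M.Adj a b) :
    HasAlmostPerfectMatching (G.induce S) := by
  refine ⟨M.toInduce S, hM.toInduce, ⟨s, hsS⟩, Set.ext fun a => ⟨?_, fun has => ?_⟩⟩
  · rintro ⟨b, hab⟩ rfl
    exact hs b b.2 hab
  · obtain ⟨b, hb, hab⟩ := h a a.2 fun ha => has (Subtype.ext ha)
    exact ⟨⟨b, hb⟩, hab⟩

theorem Subgraph.IsMatching.map_induce_sup {M : G.Subgraph} {N : (G.induce S).Subgraph}
    (hN : N.IsMatching) (hM : M.IsMatching) (hMS : M.verts ⊆ Sᶜ) :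
    (N.map (Embedding.induce S).toHom ⊔ M).IsMatching := by
  refine (hN.map _ (Embedding.induce (G := G) S).injective).sup hM ?_
  rw [(hN.map _ (Embedding.induce (G := G) S).injective).support_eq_verts, hM.support_eq_verts]
  rintro T hTN hTM x hx
  obtain ⟨a, -, rfl⟩ := hTN hx
  exact hMS (hTM hx) a.2

theorem hasPerfectMatching_of_induce {M : G.Subgraph} (hM : M.IsMatching) (hMS : M.verts = Sᶜ)
    (h : HasPerfectMatching (G.induce S)) : HasPerfectMatching G := by
  obtain ⟨N, hN⟩ := h
  refine ⟨_, hN.1.map_induce_sup hM hMS.le, fun v => ?_⟩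
  by_cases hv : v ∈ S
  · exact Or.inl ⟨⟨v, hv⟩, hN.2 _, rfl⟩
  · exact Or.inr (hMS ▸ hv)

theorem hasAlmostPerfectMatching_of_induce {M : G.Subgraph} (hM : M.IsMatching)
    (hMS : M.verts = Sᶜ) (h : HasAlmostPerfectMatching (G.induce S)) :
    HasAlmostPerfectMatching G := by
  obtain ⟨N, hN, s, hs⟩ := h
  refine ⟨_, hN.map_induce_sup hM hMS.le, s, Set.ext fun v => ⟨?_, fun hvs => ?_⟩⟩
  · rintro (⟨a, ha, rfl⟩ | hv) hvs
    · exact (hs ▸ ha) (Subtype.ext hvs)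
    · exact (hMS ▸ hv) (hvs ▸ s.2)
  · by_cases hv : v ∈ S
    · exact Or.inl ⟨⟨v, hv⟩, hs ▸ fun h => hvs (congrArg Subtype.val h), rfl⟩
    · exact Or.inr (hMS ▸ hv)

end SimpleGraph

namespace Sun

open SimpleGraph Sum

variable {n : ℕ} {lam : Fin n → ℕ}

local notation "SV" => Fin n ⊕ ((i : Fin n) × Fin (lam i))

def rayIdx : SV → Fin n
  | inl i => i
  | inr p => p.1

def depth : SV → ℕ
  | inl _ => 0
  | inr p => p.2 + 1

/-- Beyond the tip of the ray (`d > lam i`) this is the junk value `inl i`. -/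
def rayVertex (i : Fin n) : ℕ → SV
  | 0 => inl i
  | d + 1 => if h : d < lam i then inr ⟨i, d, h⟩ else inl i

@[simp]
theorem rayIdx_rayVertex (i : Fin n) (d : ℕ) : rayIdx (rayVertex (lam := lam) i d) = i := by
  cases d with
  | zero => rfl
  | succ d => simp only [rayVertex]; split_ifs <;> rfl

theorem depth_rayVertex {i : Fin n} {d : ℕ} (hd : d ≤ lam i) :
    depth (rayVertex (lam := lam) i d) = d := by
  cases d with
  | zero => rfl
  | succ d => simp [rayVertex, show d < lam i by omega, depth]

theorem rayVertex_rayIdx_depth (x : SV) : rayVertex (rayIdx x) (depth x) = x := by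
  rcases x with i | ⟨i, j⟩
  · rfl
  · simp [rayIdx, depth, rayVertex]

theorem depth_le (x : SV) : depth x ≤ lam (rayIdx x) := by
  rcases x with i | ⟨i, j⟩
  · exact Nat.zero_le _
  · exact j.2

theorem eq_rayVertex_iff {x : SV} {i : Fin n} {d : ℕ} (hd : d ≤ lam i) :
    x = rayVertex i d ↔ rayIdx x = i ∧ depth x = d := by
  constructor
  · rintro rfl
    exact ⟨rayIdx_rayVertex i d, depth_rayVertex hd⟩
  · rintro ⟨rfl, rfl⟩
    exact (rayVertex_rayIdx_depth x).symm

theorem inl_ne_rayVertex {i j : Fin n} {d : ℕ} (hd₀ : 1 ≤ d) (hd : d ≤ lam j) :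
    (inl i : SV) ≠ rayVertex j d := fun h => by
  have := congrArg depth h
  rw [depth_rayVertex hd] at this
  simp only [depth] at this
  omega

variable {body : Fin n → Fin n → Prop}

theorem adj_iff_of_depth_ne_zero {x y : SV} (hx : depth x ≠ 0) :
    (fromRel (sunRel n lam body)).Adj x y ↔
      rayIdx x = rayIdx y ∧ (depth x + 1 = depth y ∨ depth y + 1 = depth x) := by
  rcases x with i | ⟨i, j⟩
  · exact absurd rfl hx
  rcases y with i' | ⟨i', j'⟩
  · simp [sunRel, rayIdx, depth, eq_comm]
  · by_cases hi : i = i'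
    · subst hi
      simp only [fromRel_adj, ne_eq, inr.injEq, Sigma.mk.injEq, heq_eq_eq, Fin.ext_iff, true_and,
        sunRel, rayIdx, depth, Nat.add_right_cancel_iff]
      omega
    · simp [sunRel, rayIdx, depth, hi, Ne.symm hi]

theorem adj_rayVertex_iff {i : Fin n} {d : ℕ} {y : SV} (hd₀ : 1 ≤ d) (hd : d ≤ lam i) :
    (fromRel (sunRel n lam body)).Adj (rayVertex i d) y ↔
      y = rayVertex i (d - 1) ∨ (d < lam i ∧ y = rayVertex i (d + 1)) := by
  have := depth_le y
  rw [adj_iff_of_depth_ne_zero (by rw [depth_rayVertex hd]; omega), rayIdx_rayVertex,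
    depth_rayVertex hd, eq_rayVertex_iff (by omega)]
  constructor
  · rintro ⟨hi, h | h⟩
    · rw [← hi] at this
      exact Or.inr ⟨by omega, (eq_rayVertex_iff (by omega)).mpr ⟨hi.symm, h.symm⟩⟩
    · exact Or.inl ⟨hi.symm, by omega⟩
  · rintro (⟨rfl, h⟩ | ⟨hlt, rfl⟩)
    · exact ⟨rfl, Or.inr (by omega)⟩
    · exact ⟨(rayIdx_rayVertex _ _).symm, Or.inl (depth_rayVertex hlt).symm⟩

theorem adj_inl_cases {i : Fin n} {y : SV} (h : (fromRel (sunRel n lam body)).Adj (inl i) y) :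
    (∃ j, y = inl j) ∨ y = rayVertex i 1 := by
  rcases y with j | p
  · exact Or.inl ⟨j, rfl⟩
  · have := depth_le (inr p)
    rw [adj_comm, adj_iff_of_depth_ne_zero (by simp [depth])] at h
    exact Or.inr ((eq_rayVertex_iff (by simp_all [rayIdx, depth])).mpr
      ⟨h.1, by simpa [depth] using h.2⟩)

variable {M : (fromRel (sunRel n lam body)).Subgraph}

theorem adj_pred_or_adj_succ (hM : M.IsMatching) {i : Fin n} {d : ℕ} (hd₀ : 1 ≤ d)
    (hd : d ≤ lam i) (hmem : rayVertex i d ∈ M.verts) :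
    M.Adj (rayVertex i d) (rayVertex i (d - 1)) ∨
      (d < lam i ∧ M.Adj (rayVertex i d) (rayVertex i (d + 1))) := by
  obtain ⟨y, hy, -⟩ := hM hmem
  rcases (adj_rayVertex_iff hd₀ hd).mp (M.adj_sub hy) with rfl | ⟨hlt, rfl⟩
  · exact Or.inl hy
  · exact Or.inr ⟨hlt, hy⟩

theorem adj_rayVertex_pred_iff (hM : M.IsMatching) {i : Fin n} {m t : ℕ}
    (hm : 1 ≤ m) (ht : t ≤ lam i)
    (hmem : ∀ d, m ≤ d → d ≤ t → rayVertex i d ∈ M.verts)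
    (htop : t < lam i → ¬ M.Adj (rayVertex i t) (rayVertex i (t + 1)))
    {d : ℕ} (hmd : m ≤ d) (hdt : d ≤ t) :
    M.Adj (rayVertex i d) (rayVertex i (d - 1)) ↔ Even (t - d) := by
  induction hk : t - d generalizing d with
  | zero =>
    obtain rfl : d = t := by omega
    refine iff_of_true ?_ Even.zero
    rcases adj_pred_or_adj_succ hM (by omega) ht (hmem d hmd hdt) with h | ⟨hlt, h⟩
    · exact h
    · exact absurd h (htop hlt)
  | succ k ih =>
    have hup_iff := ih (d := d + 1) (by omega) (by omega) (by omega)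
    rw [Nat.add_sub_cancel, M.adj_comm] at hup_iff
    rw [Nat.even_add_one]
    by_cases hup : M.Adj (rayVertex i d) (rayVertex i (d + 1))
    · refine iff_of_false (hM.not_adj_left_of_ne ?_ hup) (not_not.mpr (hup_iff.mp hup))
      intro h
      have := congrArg depth h
      rw [depth_rayVertex (by omega), depth_rayVertex (by omega)] at this
      omega
    · refine iff_of_true ?_ (hup_iff.not.mp hup)
      rcases adj_pred_or_adj_succ hM (by omega) (by omega) (hmem d hmd hdt) with h | ⟨-, h⟩
      · exact h
      · exact absurd h hup

def CoversRay (W : Set SV) (i : Fin n) : Prop :=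
  ∀ d, 1 ≤ d → d ≤ lam i → rayVertex i d ∈ W

theorem adj_rayVertex_one_iff_odd (hM : M.IsMatching) {i : Fin n}
    (hcov : CoversRay M.verts i) : M.Adj (inl i) (rayVertex i 1) ↔ Odd (lam i) := by
  rcases Nat.eq_zero_or_pos (lam i) with h0 | hpos
  · have hloop : rayVertex (lam := lam) i 1 = inl i := by simp [rayVertex, h0]
    rw [hloop, h0]
    exact iff_of_false (fun h => (M.adj_sub h).ne rfl) (by decide)
  · have key := adj_rayVertex_pred_iff hM le_rfl le_rfl hcov (by omega) le_rfl hpos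
    rw [M.adj_comm, ← Nat.not_even_iff_odd]
    refine key.trans ?_
    simp only [Nat.even_iff]
    omega

theorem adj_rayVertex_one_iff_even_of_notMem (hM : M.IsMatching) {i : Fin n} {h : ℕ} (hh₀ : 1 ≤ h)
    (hh : h ≤ lam i) (hhole : rayVertex i h ∉ M.verts)
    (hcov : ∀ d, 1 ≤ d → d ≤ lam i → d ≠ h → rayVertex i d ∈ M.verts) :
    M.Adj (inl i) (rayVertex i 1) ↔ Even (lam i) := by
  have hhole_adj : ∀ x, ¬ M.Adj x (rayVertex i h) := fun x hx => hhole (M.edge_vert hx.symm)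
  have habove : Even (lam i - h) := by
    rcases hh.eq_or_lt with rfl | hlt
    · simp
    have := adj_rayVertex_pred_iff hM (m := h + 1) (by omega) le_rfl
      (fun d hd1 hd => hcov d (by omega) hd (by omega)) (by omega) le_rfl hlt
    rw [Nat.add_sub_cancel] at this
    have := this.not.mp (hhole_adj _)
    simp only [Nat.even_iff] at this ⊢
    omega
  rcases hh₀.eq_or_lt with rfl | hlt
  · refine iff_of_false (hhole_adj _) ?_
    simp only [Nat.even_iff] at habove ⊢
    omega
  · have key := adj_rayVertex_pred_iff hM (t := h - 1) le_rfl (by omega)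
      (fun d hd1 hd => hcov d hd1 (by omega) (by omega))
      (fun _ hadj => hhole_adj _ (by rwa [Nat.sub_add_cancel hh₀] at hadj)) le_rfl (by omega)
    rw [M.adj_comm]
    refine key.trans ?_
    simp only [Nat.even_iff] at habove ⊢
    omega

theorem exists_adj_inl_of_even (hM : M.IsMatching) {i : Fin n} (hi : inl i ∈ M.verts)
    (hev : Even (lam i)) (hcov : CoversRay M.verts i) : ∃ j, M.Adj (inl i) (inl j) := by
  obtain ⟨y, hy, -⟩ := hM hi
  rcases adj_inl_cases (M.adj_sub hy) with ⟨j, rfl⟩ | rfl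
  · exact ⟨j, hy⟩
  · exact absurd ((adj_rayVertex_one_iff_odd hM hcov).mp hy) (Nat.not_odd_iff_even.mpr hev)

theorem even_of_adj_inl (hM : M.IsMatching) {i j : Fin n} (h : M.Adj (inl i) (inl j))
    (hcov : CoversRay M.verts j) : Even (lam j) := by
  by_contra hodd
  rw [Nat.not_even_iff_odd] at hodd
  exact inl_ne_rayVertex le_rfl hodd.pos
    (hM.eq_of_adj_left h.symm ((adj_rayVertex_one_iff_odd hM hcov).mpr hodd))

theorem coversRay_compl_rayVertex {i₀ j : Fin n} {h : ℕ} (hh : h ≤ lam i₀)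
    (hj : h = 0 ∨ j ≠ i₀) : CoversRay ({rayVertex i₀ h}ᶜ : Set SV) j := by
  intro d hd₀ hd heq
  have hi := congrArg rayIdx heq
  simp only [rayIdx_rayVertex] at hi
  subst hi
  have := congrArg depth heq
  rw [depth_rayVertex hd, depth_rayVertex hh] at this
  omega

variable (n lam) in
def evenBeginnings : Set SV := {x | ∃ i, x = inl i ∧ Even (lam i)}

theorem mem_evenBeginnings_iff {x : SV} :
    x ∈ evenBeginnings n lam ↔ depth x = 0 ∧ Even (lam (rayIdx x)) := by
  rcases x with i | p
  · simp [evenBeginnings, depth, rayIdx]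
  · simp [evenBeginnings, depth]

theorem rayVertex_one_notMem_evenBeginnings {i : Fin n} (hi : 1 ≤ lam i) :
    rayVertex i 1 ∉ evenBeginnings n lam := by
  rintro ⟨j, h, -⟩
  exact inl_ne_rayVertex le_rfl hi h.symm

theorem exists_adj_mem_evenBeginnings (hM : M.IsMatching) {i : Fin n} (hi : inl i ∈ M.verts)
    (hev : Even (lam i)) (hcov : CoversRay M.verts i)
    (hcov' : ∀ j, M.Adj (inl i) (inl j) → CoversRay M.verts j) :
    ∃ b ∈ evenBeginnings n lam, M.Adj (inl i) b := by
  obtain ⟨j, hj⟩ := exists_adj_inl_of_even hM hi hev hcov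
  exact ⟨inl j, ⟨j, rfl, even_of_adj_inl hM hj (hcov' j hj)⟩, hj⟩

theorem hasPerfectMatching_induce_evenBeginnings
    (h : HasPerfectMatching (fromRel (sunRel n lam body))) :
    HasPerfectMatching ((fromRel (sunRel n lam body)).induce (evenBeginnings n lam)) := by
  obtain ⟨M, hM⟩ := h
  have hcov (j : Fin n) : CoversRay M.verts j := fun _ _ _ => hM.2 _
  refine hasPerfectMatching_induce_of_isMatching hM.1 ?_
  rintro _ ⟨i, rfl, hev⟩
  exact exists_adj_mem_evenBeginnings hM.1 (hM.2 _) hev (hcov i) fun j _ => hcov j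

theorem hasAlmostPerfectMatching_induce_evenBeginnings_of_inl (hM : M.IsMatching) {i₀ : Fin n}
    (hu : M.verts = {inl i₀}ᶜ) :
    HasAlmostPerfectMatching ((fromRel (sunRel n lam body)).induce (evenBeginnings n lam)) := by
  have hcov (j : Fin n) : CoversRay M.verts j :=
    hu ▸ coversRay_compl_rayVertex (Nat.zero_le _) (Or.inl rfl)
  have hev : Even (lam i₀) := by
    by_contra hodd
    have := (adj_rayVertex_one_iff_odd hM (hcov i₀)).mpr (Nat.not_even_iff_odd.mp hodd)
    exact (hu ▸ M.edge_vert this) rfl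
  refine hasAlmostPerfectMatching_induce_of_isMatching hM ⟨i₀, rfl, hev⟩
    (fun b _ hb => (hu ▸ M.edge_vert hb) rfl) ?_
  rintro _ ⟨i, rfl, hevi⟩ hne
  exact exists_adj_mem_evenBeginnings hM (hu ▸ hne) hevi (hcov i) fun j _ => hcov j

/-- The vertex left alone on the beginnings of even rays is `v_{i₀}` itself when `λ_{i₀}` is
even (it is matched into its ray), and otherwise the partner of `v_{i₀}`. -/
theorem hasAlmostPerfectMatching_induce_evenBeginnings_of_rayVertex (hM : M.IsMatching)
    {i₀ : Fin n} {h : ℕ} (hh₀ : 1 ≤ h) (hh : h ≤ lam i₀)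
    (hu : M.verts = {rayVertex i₀ h}ᶜ) :
    HasAlmostPerfectMatching ((fromRel (sunRel n lam body)).induce (evenBeginnings n lam)) := by
  have hcov (j : Fin n) (hj : j ≠ i₀) : CoversRay M.verts j :=
    hu ▸ coversRay_compl_rayVertex hh (Or.inr hj)
  have hmem (i : Fin n) : inl i ∈ M.verts := hu ▸ inl_ne_rayVertex hh₀ hh
  have hiff := adj_rayVertex_one_iff_even_of_notMem hM hh₀ hh (hu ▸ fun h => h rfl)
    fun d hd₀ hd hdh => hu ▸ fun heq => hdh (by
      simpa [depth_rayVertex hd, depth_rayVertex hh] using congrArg depth heq)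
  by_cases hev : Even (lam i₀)
  · have hray := hiff.mpr hev
    refine hasAlmostPerfectMatching_induce_of_isMatching hM ⟨i₀, rfl, hev⟩
      (fun b hb hadj => rayVertex_one_notMem_evenBeginnings (by omega)
        (hM.eq_of_adj_left hadj hray ▸ hb)) ?_
    rintro _ ⟨i, rfl, hevi⟩ hne
    refine exists_adj_mem_evenBeginnings hM (hmem i) hevi (hcov i fun h => hne (h ▸ rfl))
      fun j hj => hcov j ?_
    rintro rfl
    exact inl_ne_rayVertex le_rfl (by omega) (hM.eq_of_adj_left hj.symm hray)
  · obtain ⟨y, hy, -⟩ := hM (hmem i₀)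
    obtain ⟨i₁, rfl⟩ : ∃ i₁, y = inl i₁ := by
      rcases adj_inl_cases (M.adj_sub hy) with h | rfl
      · exact h
      · exact absurd (hiff.mp hy) hev
    have hne₁ : i₁ ≠ i₀ := fun h => (M.adj_sub hy).ne (h ▸ rfl)
    refine hasAlmostPerfectMatching_induce_of_isMatching hM
      ⟨i₁, rfl, even_of_adj_inl hM hy (hcov i₁ hne₁)⟩ (fun b hb hadj => ?_) ?_
    · obtain ⟨j, rfl, hevj⟩ := hb
      obtain rfl : i₀ = j := Sum.inl.inj (hM.eq_of_adj_left hy.symm hadj)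
      exact hev hevj
    rintro _ ⟨i, rfl, hevi⟩ hne
    refine exists_adj_mem_evenBeginnings hM (hmem i) hevi (hcov i fun h => hev (h ▸ hevi))
      fun j hj => hcov j ?_
    rintro rfl
    exact hne (hM.eq_of_adj_left hj.symm hy)

theorem hasAlmostPerfectMatching_induce_evenBeginnings
    (h : HasAlmostPerfectMatching (fromRel (sunRel n lam body))) :
    HasAlmostPerfectMatching ((fromRel (sunRel n lam body)).induce (evenBeginnings n lam)) := by
  obtain ⟨M, hM, u, hu⟩ := h
  rw [← rayVertex_rayIdx_depth u] at hu
  rcases Nat.eq_zero_or_pos (depth u) with h0 | hpos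
  · rw [h0] at hu
    exact hasAlmostPerfectMatching_induce_evenBeginnings_of_inl hM hu
  · exact hasAlmostPerfectMatching_induce_evenBeginnings_of_rayVertex hM hpos (depth_le u) hu

/-- The edges of the canonical matching of the rays: each ray is paired off from its tip
downwards, so that its beginning is used exactly when the ray is odd. -/
def IsRayStep (x y : SV) : Prop :=
  rayIdx x = rayIdx y ∧ depth y = depth x + 1 ∧ Even (lam (rayIdx y) - depth y)

theorem IsRayStep.adj {x y : SV} (h : IsRayStep x y) : (fromRel (sunRel n lam body)).Adj x y := by
  rw [adj_comm, adj_iff_of_depth_ne_zero (by have := h.2.1; omega)]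
  exact ⟨h.1.symm, Or.inr h.2.1.symm⟩

theorem IsRayStep.notMem_evenBeginnings {x y : SV} (h : IsRayStep x y) :
    x ∉ evenBeginnings n lam ∧ y ∉ evenBeginnings n lam := by
  obtain ⟨hi, hd, he⟩ := h
  have := depth_le y
  simp only [mem_evenBeginnings_iff, ← hi, Nat.even_iff] at he this ⊢
  omega

variable (body) in
def rayMatching : (fromRel (sunRel n lam body)).Subgraph where
  verts := (evenBeginnings n lam)ᶜ
  Adj x y := IsRayStep x y ∨ IsRayStep y x
  adj_sub := by
    rintro x y (h | h)
    · exact h.adj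
    · exact h.adj.symm
  edge_vert := by
    rintro x y (h | h)
    · exact h.notMem_evenBeginnings.1
    · exact h.notMem_evenBeginnings.2
  symm := ⟨fun _ _ => Or.symm⟩

theorem rayMatching_adj_iff {x y : SV} (hx : x ∉ evenBeginnings n lam) :
    (rayMatching body).Adj x y ↔ y = rayVertex (rayIdx x)
      (if Even (lam (rayIdx x) - depth x) then depth x - 1 else depth x + 1) := by
  have hxl := depth_le x
  have hyl := depth_le y
  rw [mem_evenBeginnings_iff] at hx
  have hle : (if Even (lam (rayIdx x) - depth x) then depth x - 1 else depth x + 1) ≤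
      lam (rayIdx x) := by
    split_ifs with h <;> simp only [Nat.even_iff] at h <;> omega
  rw [eq_rayVertex_iff hle]
  simp only [rayMatching, IsRayStep]
  constructor
  · rintro (⟨hi, hd, he⟩ | ⟨hi, hd, he⟩)
    · rw [← hi] at he hyl
      refine ⟨hi.symm, ?_⟩
      split_ifs with h <;> simp only [Nat.even_iff] at h he <;> omega
    · rw [if_pos he]
      exact ⟨hi, by omega⟩
  · rintro ⟨hi, hd⟩
    split_ifs at hd with h
    · simp only [Nat.even_iff] at h hx
      exact Or.inr ⟨hi, by omega, Nat.even_iff.mpr h⟩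
    · refine Or.inl ⟨hi.symm, hd, ?_⟩
      rw [hi, hd]
      simp only [Nat.even_iff] at h ⊢
      omega

theorem rayMatching_isMatching : (rayMatching (lam := lam) body).IsMatching :=
  fun _ hx => ⟨_, (rayMatching_adj_iff hx).mpr rfl, fun _ hy => (rayMatching_adj_iff hx).mp hy⟩

end Sun

open SimpleGraph Sun in
theorem sun_perfectMatching_iff_general (n : ℕ) (lam : Fin n → ℕ) :
    (HasPerfectMatching (sunGraph n lam) ↔
      HasPerfectMatching ((sunGraph n lam).induce
        {x | ∃ i : Fin n, x = Sum.inl i ∧ Even (lam i)})) ∧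
    (HasAlmostPerfectMatching (sunGraph n lam) ↔
      HasAlmostPerfectMatching ((sunGraph n lam).induce
        {x | ∃ i : Fin n, x = Sum.inl i ∧ Even (lam i)})) := by
  have hR :=
    rayMatching_isMatching (lam := lam) (body := fun i i' => (i' : ℕ) = ((i : ℕ) + 1) % n)
  exact ⟨⟨hasPerfectMatching_induce_evenBeginnings, hasPerfectMatching_of_induce hR rfl⟩,
    ⟨hasAlmostPerfectMatching_induce_evenBeginnings,
      hasAlmostPerfectMatching_of_induce hR rfl⟩⟩

/-- The sun `S(n; λ_1, …, λ_n)` has a perfect (resp. almost perfect) matching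
iff the subgraph induced on the beginnings of the rays of even length (the set
`{v_i : λ_i even}`) has a perfect (resp. almost perfect) matching. -/
theorem sun_perfectMatching_iff (n : ℕ) (hn : 3 ≤ n) (lam : Fin n → ℕ)
    (hpos : ∀ i, 0 < lam i) :
    (HasPerfectMatching (sunGraph n lam) ↔
      HasPerfectMatching ((sunGraph n lam).induce
        {x | ∃ i : Fin n, x = Sum.inl i ∧ Even (lam i)})) ∧
    (HasAlmostPerfectMatching (sunGraph n lam) ↔
      HasAlmostPerfectMatching ((sunGraph n lam).induce
        {x | ∃ i : Fin n, x = Sum.inl i ∧ Even (lam i)})) :=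
  sun_perfectMatching_iff_general n lam
end

section
/- Let G_1,…,G_n be connected graphs with λ_1,…,λ_n vertices respectively, and let G be the graph obtained by joining each vertex v_i of the cycle C_n (on vertex set {v_1,…,v_n} with edges v_i v_{i+1} for i ∈ [n−1] and v_n v_1) by an edge to an arbitrarily chosen vertex u_i of G_i. If G has a connected partition of type μ, then the sun graph S(n; λ_1,…,λ_n) also has a connected partition of type μ. -/
section SunAux
open SimpleGraph

variable {n : ℕ} {lam : Fin n → ℕ}

private lemma sunAdj_cycle {i i' : Fin n} (h : (cycleG n).Adj i i') :
    (sunGraph n lam).Adj (Sum.inl i) (Sum.inl i') := by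
  rw [cycleG, fromRel_adj] at h
  rw [sunGraph, fromRel_adj]
  refine ⟨fun hc => h.1 (by injection hc), ?_⟩
  exact h.2

private lemma sunAdj_zero {i : Fin n} {k : Fin (lam i)} (hk : (k : ℕ) = 0) :
    (sunGraph n lam).Adj (Sum.inl i) (Sum.inr ⟨i, k⟩) := by
  rw [sunGraph, fromRel_adj]
  exact ⟨by simp, Or.inl ⟨rfl, hk⟩⟩

private lemma sunAdj_succ {i : Fin n} {k k' : Fin (lam i)} (hk : (k' : ℕ) = (k : ℕ) + 1) :
    (sunGraph n lam).Adj (Sum.inr ⟨i, k⟩) (Sum.inr ⟨i, k'⟩) := by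
  rw [sunGraph, fromRel_adj]
  refine ⟨fun hc => ?_, Or.inl ⟨rfl, hk⟩⟩
  · simp only [Sum.inr.injEq, Sigma.mk.inj_iff, heq_eq_eq, true_and] at hc
    omega

private lemma ray_chain {q : Finset (Fin n ⊕ ((i : Fin n) × Fin (lam i)))} {i : Fin n} :
    ∀ (d : ℕ) (a b : Fin (lam i)), (b : ℕ) = (a : ℕ) + d →
    (∀ k : Fin (lam i), a ≤ k → k ≤ b → Sum.inr ⟨i, k⟩ ∈ q) →
    ∀ (ha : Sum.inr ⟨i, a⟩ ∈ (↑q : Set (Fin n ⊕ ((i : Fin n) × Fin (lam i)))))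
      (hb : Sum.inr ⟨i, b⟩ ∈ (↑q : Set (Fin n ⊕ ((i : Fin n) × Fin (lam i))))),
    ((sunGraph n lam).induce ↑q).Reachable ⟨_, ha⟩ ⟨_, hb⟩ := by
  intro d
  induction d with
  | zero =>
    intro a b hab _ ha hb
    have : a = b := Fin.ext (by omega)
    subst this
    exact SimpleGraph.Reachable.refl _
  | succ d ih =>
    intro a b hab hall ha hb
    have ha1 : (a : ℕ) + 1 < lam i := lt_of_le_of_lt (by omega : (a : ℕ) + 1 ≤ (b : ℕ)) b.isLt
    set a' : Fin (lam i) := ⟨(a : ℕ) + 1, ha1⟩ with ha'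
    have hmem : Sum.inr ⟨i, a'⟩ ∈ q := hall a' (by simp [ha', Fin.le_def]) (by simp [ha', Fin.le_def]; omega)
    have hmem' : Sum.inr ⟨i, a'⟩ ∈ (↑q : Set (Fin n ⊕ ((i : Fin n) × Fin (lam i)))) := hmem
    have step : ((sunGraph n lam).induce ↑q).Adj ⟨_, ha⟩ ⟨_, hmem'⟩ :=
      sunAdj_succ rfl
    refine step.reachable.trans (ih a' b (by simp [ha']; omega) ?_ hmem' hb)
    intro k h1 h2
    exact hall k (le_trans (by simp [ha', Fin.le_def]) h1) h2

private lemma reachable_transfer {V W : Type} {G : SimpleGraph V} {G' : SimpleGraph W}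
    {p : Finset V} {q : Finset W} (f : V → W)
    (hf : ∀ x ∈ p, f x ∈ q)
    (hstep : ∀ x y, x ∈ p → y ∈ p → G.Adj x y →
      ∀ (hx' : f x ∈ (↑q : Set W)) (hy' : f y ∈ (↑q : Set W)),
      (G'.induce ↑q).Reachable ⟨f x, hx'⟩ ⟨f y, hy'⟩) :
    ∀ (a b : (↑p : Set V)), (G.induce ↑p).Reachable a b →
      ∀ (hx' : f a.1 ∈ (↑q : Set W)) (hy' : f b.1 ∈ (↑q : Set W)),
      (G'.induce ↑q).Reachable ⟨f a.1, hx'⟩ ⟨f b.1, hy'⟩ := by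
  intro a b hr
  obtain ⟨w⟩ := hr
  induction w with
  | nil => intro hx' hy'; exact SimpleGraph.Reachable.refl _
  | @cons x c y h w ih =>
    intro hx' hy'
    have hadj : G.Adj x.1 c.1 := h
    have hcq : f c.1 ∈ (↑q : Set W) := hf c.1 c.2
    exact (hstep x.1 c.1 x.2 c.2 hadj hx' hcq).trans (ih hcq hy')

end SunAux

/-- If `G` is obtained by joining each vertex `v_i` of the cycle `C_n` by an
edge to a chosen vertex `u_i` of a connected graph `G_i` on `λ_i` vertices, and `G` has a
connected partition of type `μ`, then so does the sun `S(n; λ_1, …, λ_n)`. -/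
theorem sun_connectedPartition_of_attach_cycle (n : ℕ) (hn : 3 ≤ n)
    (lam : Fin n → ℕ) (hpos : ∀ i, 0 < lam i)
    (Vs : Fin n → Type) [∀ i, Fintype (Vs i)] [∀ i, DecidableEq (Vs i)]
    (Gs : ∀ i, SimpleGraph (Vs i)) (hconn : ∀ i, (Gs i).Connected)
    (hcard : ∀ i, Fintype.card (Vs i) = lam i)
    (u : ∀ i, Vs i) (μ : Multiset ℕ)
    (h : HasConnectedPartition (attachGraph (cycleG n) Gs u) μ) :
    HasConnectedPartition (sunGraph n lam) μ := by
  classical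
  obtain ⟨P, hPconn, hPtype⟩ := h
  set V := (Fin n ⊕ ((i : Fin n) × Vs i)) with hV
  let enc : Finset V → ℕ := fun s => (Fintype.equivFin (Finset V)) s + 1
  let wt : (i : Fin n) → Vs i → ℕ := fun i v =>
    if P.part (Sum.inr ⟨i, v⟩) = P.part (Sum.inr ⟨i, u i⟩) then 0
    else enc (P.part (Sum.inr ⟨i, v⟩))
  have wt_inj : ∀ i (v v' : Vs i), wt i v = wt i v' →
      P.part (Sum.inr ⟨i, v⟩) = P.part (Sum.inr ⟨i, v'⟩) := by
    intro i v v' hvv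
    by_cases h1 : P.part (Sum.inr ⟨i, v⟩) = P.part (Sum.inr ⟨i, u i⟩) <;>
      by_cases h2 : P.part (Sum.inr ⟨i, v'⟩) = P.part (Sum.inr ⟨i, u i⟩)
    · exact h1.trans h2.symm
    · simp only [wt, if_pos h1, if_neg h2, enc] at hvv; omega
    · simp only [wt, if_neg h1, if_pos h2, enc] at hvv; omega
    · simp only [wt, if_neg h1, if_neg h2, enc] at hvv
      exact (Fintype.equivFin (Finset V)).injective (Fin.ext (by omega))
  have wt_u : ∀ i, wt i (u i) = 0 := fun i => if_pos rfl
  let e0 : (i : Fin n) → Vs i ≃ Fin (lam i) := fun i => Fintype.equivFinOfCardEq (hcard i)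
  let σ : (i : Fin n) → Equiv.Perm (Fin (lam i)) := fun i => Tuple.sort (wt i ∘ (e0 i).symm)
  let f : (i : Fin n) → Vs i ≃ Fin (lam i) := fun i => (e0 i).trans (σ i)⁻¹
  have hsymm : ∀ i k, (f i).symm k = (e0 i).symm ((σ i) k) := by
    intro i k
    simp only [f, Equiv.symm_trans_apply]
    rfl
  have hmono : ∀ i, Monotone (fun k => wt i ((f i).symm k)) := by
    intro i
    have h1 := Tuple.monotone_sort (wt i ∘ (e0 i).symm)
    have : (fun k => wt i ((f i).symm k)) = (wt i ∘ (e0 i).symm) ∘ (σ i) := by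
      funext k; simp [hsymm]
    rw [this]; exact h1
  let e : V ≃ (Fin n ⊕ ((i : Fin n) × Fin (lam i))) :=
    Equiv.sumCongr (Equiv.refl _) (Equiv.sigmaCongrRight f)
  let emb : Finset V ↪ Finset (Fin n ⊕ ((i : Fin n) × Fin (lam i))) :=
    ⟨Finset.map e.toEmbedding, Finset.map_injective e.toEmbedding⟩
  refine ⟨⟨P.parts.map emb, ?_, ?_, ?_⟩, ?_, ?_⟩
  · rw [Finset.supIndep_iff_pairwiseDisjoint]
    intro s hs t ht hst
    simp only [Finset.mem_coe, Finset.mem_map] at hs ht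
    obtain ⟨a, ha, rfl⟩ := hs
    obtain ⟨b, hb, rfl⟩ := ht
    have hab : a ≠ b := fun hcon => hst (by rw [hcon])
    exact (Finset.disjoint_map _).2 (P.disjoint ha hb hab)
  · ext x
    simp only [Finset.mem_sup, Finset.mem_map, Finset.mem_univ, iff_true]
    have hx : e.symm x ∈ P.parts.sup id := by rw [P.sup_parts]; exact Finset.mem_univ _
    obtain ⟨a, ha, hxa⟩ := Finset.mem_sup.mp hx
    exact ⟨a.map e.toEmbedding, ⟨a, ha, rfl⟩, Finset.mem_map.mpr ⟨e.symm x, hxa, by simp⟩⟩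
  · intro hcon
    rw [Finset.mem_map] at hcon
    obtain ⟨a, ha, hae⟩ := hcon
    have hne := P.nonempty_of_mem_parts ha
    have hae' : a = ∅ := Finset.map_eq_empty.mp hae
    exact Finset.not_nonempty_empty (hae' ▸ hne)
  · intro q hq
    rw [Finset.mem_map] at hq
    obtain ⟨p, hp, rfl⟩ := hq
    have he_inl : ∀ i : Fin n, e (Sum.inl i) = Sum.inl i := fun _ => rfl
    have he_inr : ∀ (i : Fin n) (x : Vs i), e (Sum.inr ⟨i, x⟩) = Sum.inr ⟨i, f i x⟩ :=
      fun _ _ => rfl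
    have hinq : ∀ x ∈ p, e x ∈ emb p := fun x hx => Finset.mem_map_of_mem _ hx
    have hpartmem : ∀ x : V, x ∈ p ↔ P.part x = p := by
      intro x
      constructor
      · exact fun hx => P.part_eq_of_mem hp hx
      · intro hx; rw [← hx]; exact P.mem_part (Finset.mem_univ _)
    have hintmem : ∀ (i : Fin n) (k : Fin (lam i)) (v : Vs i), Sum.inr ⟨i, v⟩ ∈ p →
        wt i ((f i).symm k) = wt i v → Sum.inr ⟨i, k⟩ ∈ emb p := by
      intro i k v hv hwk
      have hpart := wt_inj i ((f i).symm k) v hwk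
      have hmem : (Sum.inr ⟨i, (f i).symm k⟩ : V) ∈ p := by
        rw [hpartmem, hpart]
        exact (hpartmem _).1 hv
      have h2 := hinq _ hmem
      rw [he_inr] at h2
      rwa [Equiv.apply_symm_apply] at h2
    have hbetween : ∀ (i : Fin n) (a b k : Fin (lam i)), a ≤ k → k ≤ b →
        wt i ((f i).symm a) = wt i ((f i).symm b) →
        wt i ((f i).symm k) = wt i ((f i).symm a) := by
      intro i a b k h1 h2 heq
      have u1 := hmono i h1
      have u2 := hmono i h2
      simp only at u1 u2
      omega
    have hhalf : ∀ x y : V, x ∈ p → y ∈ p →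
        (match x, y with
          | Sum.inl i, Sum.inl i' => (cycleG n).Adj i i'
          | Sum.inl i, Sum.inr pp => pp.1 = i ∧ pp.2 = u pp.1
          | Sum.inr pp, Sum.inr qq => ∃ h : pp.1 = qq.1, (Gs qq.1).Adj (h ▸ pp.2) qq.2
          | _, _ => False) →
        ∀ (hx' : e x ∈ (↑(emb p) : Set (Fin n ⊕ ((i : Fin n) × Fin (lam i)))))
          (hy' : e y ∈ (↑(emb p) : Set (Fin n ⊕ ((i : Fin n) × Fin (lam i))))),
        ((sunGraph n lam).induce ↑(emb p)).Reachable ⟨e x, hx'⟩ ⟨e y, hy'⟩ := by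
      intro x y hx hy hR hx' hy'
      rcases x with i | ⟨j, v⟩ <;> rcases y with i' | ⟨j', w⟩
      · have hadj : ((sunGraph n lam).induce ↑(emb p)).Adj ⟨Sum.inl i, hx'⟩ ⟨Sum.inl i', hy'⟩ :=
          sunAdj_cycle hR
        exact hadj.reachable
      · obtain ⟨h1, h2⟩ := hR
        dsimp only at h1 h2
        subst h1
        subst h2
        have hmem : ∀ k : Fin (lam j'), k ≤ f j' (u j') → Sum.inr ⟨j', k⟩ ∈ emb p := by
          intro k hk
          refine hintmem j' k (u j') hy ?_
          have h0 : wt j' ((f j').symm (f j' (u j'))) = wt j' (u j') := by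
            rw [Equiv.symm_apply_apply]
          have hmo := hmono j' hk
          simp only at hmo
          rw [h0, wt_u] at hmo
          rw [wt_u]
          omega
        have hz : Sum.inr ⟨j', (⟨0, hpos j'⟩ : Fin (lam j'))⟩ ∈ emb p :=
          hmem _ (by simp [Fin.le_def])
        have hz' : (Sum.inr ⟨j', (⟨0, hpos j'⟩ : Fin (lam j'))⟩ :
            Fin n ⊕ ((i : Fin n) × Fin (lam i))) ∈ (↑(emb p) : Set _) := hz
        have hb' : (Sum.inr ⟨j', f j' (u j')⟩ :
            Fin n ⊕ ((i : Fin n) × Fin (lam i))) ∈ (↑(emb p) : Set _) := hmem _ le_rfl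
        have step1 : ((sunGraph n lam).induce ↑(emb p)).Adj ⟨Sum.inl j', hx'⟩
            ⟨Sum.inr ⟨j', (⟨0, hpos j'⟩ : Fin (lam j'))⟩, hz'⟩ := sunAdj_zero rfl
        have chain := ray_chain (q := emb p) ((f j' (u j') : ℕ)) ⟨0, hpos j'⟩ (f j' (u j'))
          (by simp) (fun k _ h2 => hmem k h2) hz' hb'
        exact step1.reachable.trans chain
      · exact hR.elim
      · obtain ⟨h1, -⟩ := hR
        dsimp only at h1
        subst h1
        have hpv : P.part (Sum.inr ⟨j, v⟩ : V) = p := (hpartmem _).1 hx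
        have hpw : P.part (Sum.inr ⟨j, w⟩ : V) = p := (hpartmem _).1 hy
        have hwvw : wt j v = wt j w := by
          simp only [wt]
          rw [hpv, hpw]
        have hav : wt j ((f j).symm (f j v)) = wt j v := by rw [Equiv.symm_apply_apply]
        have haw : wt j ((f j).symm (f j w)) = wt j w := by rw [Equiv.symm_apply_apply]
        rcases le_total (f j v) (f j w) with hle | hle
        · have hmem : ∀ k, f j v ≤ k → k ≤ f j w → Sum.inr ⟨j, k⟩ ∈ emb p := by
            intro k h1 h2
            refine hintmem j k v hx ?_
            rw [← hav]
            exact hbetween j (f j v) (f j w) k h1 h2 (by rw [hav, haw, hwvw])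
          have hv' : (Sum.inr ⟨j, f j v⟩ : Fin n ⊕ ((i : Fin n) × Fin (lam i))) ∈
              (↑(emb p) : Set _) := hmem _ le_rfl hle
          have hw' : (Sum.inr ⟨j, f j w⟩ : Fin n ⊕ ((i : Fin n) × Fin (lam i))) ∈
              (↑(emb p) : Set _) := hmem _ hle le_rfl
          exact ray_chain (q := emb p) ((f j w : ℕ) - (f j v : ℕ)) (f j v) (f j w)
            (by have := Fin.le_def.mp hle; omega) hmem hv' hw'
        · have hmem : ∀ k, f j w ≤ k → k ≤ f j v → Sum.inr ⟨j, k⟩ ∈ emb p := by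
            intro k h1 h2
            refine hintmem j k w hy ?_
            rw [← haw]
            exact hbetween j (f j w) (f j v) k h1 h2 (by rw [hav, haw, hwvw])
          have hv' : (Sum.inr ⟨j, f j v⟩ : Fin n ⊕ ((i : Fin n) × Fin (lam i))) ∈
              (↑(emb p) : Set _) := hmem _ hle le_rfl
          have hw' : (Sum.inr ⟨j, f j w⟩ : Fin n ⊕ ((i : Fin n) × Fin (lam i))) ∈
              (↑(emb p) : Set _) := hmem _ le_rfl hle
          exact (ray_chain (q := emb p) ((f j v : ℕ) - (f j w : ℕ)) (f j w) (f j v)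
            (by have := Fin.le_def.mp hle; omega) hmem hw' hv').symm
    have hstep : ∀ x y : V, x ∈ p → y ∈ p → (attachGraph (cycleG n) Gs u).Adj x y →
        ∀ (hx' : e x ∈ (↑(emb p) : Set (Fin n ⊕ ((i : Fin n) × Fin (lam i)))))
          (hy' : e y ∈ (↑(emb p) : Set (Fin n ⊕ ((i : Fin n) × Fin (lam i))))),
        ((sunGraph n lam).induce ↑(emb p)).Reachable ⟨e x, hx'⟩ ⟨e y, hy'⟩ := by
      intro x y hx hy hadj hx' hy'
      rw [attachGraph, SimpleGraph.fromRel_adj] at hadj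
      rcases hadj.2 with hR | hR
      · exact hhalf x y hx hy hR hx' hy'
      · exact (hhalf y x hy hx hR hy' hx').symm
    rw [SimpleGraph.connected_iff]
    constructor
    · intro a b
      have ha : e.symm a.1 ∈ p := Finset.mem_map_equiv.mp a.2
      have hb : e.symm b.1 ∈ p := Finset.mem_map_equiv.mp b.2
      have hr := (hPconn p hp).preconnected ⟨e.symm a.1, ha⟩ ⟨e.symm b.1, hb⟩
      have hx' : e (e.symm a.1) ∈ (↑(emb p) : Set _) := by
        rw [Equiv.apply_symm_apply]; exact a.2
      have hy' : e (e.symm b.1) ∈ (↑(emb p) : Set _) := by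
        rw [Equiv.apply_symm_apply]; exact b.2
      have keyr := reachable_transfer (G := attachGraph (cycleG n) Gs u)
        (G' := sunGraph n lam) (p := p) (q := emb p) e hinq hstep _ _ hr hx' hy'
      have ea : (⟨e (e.symm a.1), hx'⟩ : (↑(emb p) : Set _)) = a :=
        Subtype.ext (Equiv.apply_symm_apply _ _)
      have eb : (⟨e (e.symm b.1), hy'⟩ : (↑(emb p) : Set _)) = b :=
        Subtype.ext (Equiv.apply_symm_apply _ _)
      rw [ea, eb] at keyr
      exact keyr
    · obtain ⟨x0, hx0⟩ := P.nonempty_of_mem_parts hp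
      exact ⟨⟨e x0, hinq x0 hx0⟩⟩
  · rw [Finset.map_val, Multiset.map_map, ← hPtype]
    apply Multiset.map_congr rfl
    intro s _
    simp only [Function.comp_apply]
    exact Finset.card_map _
end

section
/- Let G_1,…,G_n be connected graphs with λ_1,…,λ_n vertices respectively, and let G be the graph obtained by joining each vertex v_i of the complete graph K_n (on vertex set {v_1,…,v_n}) by an edge to an arbitrarily chosen vertex u_i of G_i. If G has a connected partition of type μ, then the complete sun graph S̄(n; λ_1,…,λ_n) also has a connected partition of type μ. -/
/-! A part of a connected partition can leave the `i`-th attached graph `G_i` only through the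
edge `u_i v_i`. Relabel the vertices of each `G_i` as `0, …, λ_i - 1` so that every part meets
`G_i` in an interval and the part containing `u_i` in an initial segment. Read in
`S̄(n; λ_1, …, λ_n)`, the same vertex sets then still form a connected partition: a part containing
a vertex of `K_n` meets each ray in an initial segment and contains the root of every ray it
meets, and a part avoiding `K_n` is an interval of a single ray. -/

theorem Fintype.exists_equiv_fin_monotone {α β : Type*} [Fintype α] [LinearOrder β] {k : ℕ}
    (hk : Fintype.card α = k) (r : α → β) : ∃ e : α ≃ Fin k, Monotone (r ∘ e.symm) := by
  let σ := Fintype.equivFinOfCardEq hk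
  exact ⟨σ.trans (Tuple.sort (r ∘ σ.symm)).symm, Tuple.monotone_sort (r ∘ σ.symm)⟩

theorem Fintype.exists_equiv_fin_ordConnected_fibers {α γ : Type*} [Fintype α] [Countable γ]
    {k : ℕ} (hk : Fintype.card α = k) (f : α → γ) (c₀ : γ) :
    ∃ e : α ≃ Fin k, (∀ c, (f ∘ e.symm ⁻¹' {c}).OrdConnected) ∧
      IsLowerSet (f ∘ e.symm ⁻¹' {c₀}) := by
  classical
  obtain ⟨ι, hι⟩ := Countable.exists_injective_nat γ
  -- sorting by `key ∘ f` makes the fibres of `f` consecutive, the fibre of `c₀` first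
  let key : γ → WithBot ℕ := fun c => if c = c₀ then ⊥ else ι c
  have hkey : Function.Injective key := by
    intro a b hab
    by_cases ha : a = c₀ <;> by_cases hb : b = c₀ <;> simp_all [key, hι.eq_iff]
  obtain ⟨e, he⟩ := exists_equiv_fin_monotone hk (key ∘ f)
  have hfib : ∀ c, f ∘ e.symm ⁻¹' {c} = key ∘ f ∘ e.symm ⁻¹' {key c} := fun c => by
    ext; simp [hkey.eq_iff]
  refine ⟨e, fun c => hfib c ▸ Set.ordConnected_singleton.preimage_mono he, ?_⟩
  intro a b hba (ha : f (e.symm a) = c₀)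
  have hbot : key (f (e.symm b)) ≤ key c₀ := ha ▸ he hba
  exact hkey (le_antisymm hbot (by simp [key]))

def Finpartition.mapEquiv {α β : Type*} [Fintype α] [Fintype β] [DecidableEq α] [DecidableEq β]
    (e : α ≃ β) (P : Finpartition (Finset.univ : Finset α)) :
    Finpartition (Finset.univ : Finset β) :=
  (P.map (e.finsetCongr.toOrderIso (fun _ _ => Finset.map_subset_map.mpr)
    (fun _ _ => Finset.map_subset_map.mpr))).copy (Finset.map_univ_equiv e)

theorem Finpartition.parts_mapEquiv {α β : Type*} [Fintype α] [Fintype β] [DecidableEq α]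
    [DecidableEq β] (e : α ≃ β) (P : Finpartition (Finset.univ : Finset α)) :
    (P.mapEquiv e).parts = P.parts.map e.finsetCongr.toEmbedding :=
  rfl

namespace SimpleGraph

theorem induce_connected_of_descent {V : Type*} {G : SimpleGraph V} {s : Set V} (f : V → ℕ)
    {x₀ : V} (h₀ : x₀ ∈ s) (hdesc : ∀ x ∈ s, x ≠ x₀ → ∃ y ∈ s, G.Adj x y ∧ f y < f x) :
    (G.induce s).Connected := by
  have hreach : ∀ x (hx : x ∈ s), (G.induce s).Reachable ⟨x, hx⟩ ⟨x₀, h₀⟩ := by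
    intro x
    induction x using (measure f).wf.induction with
    | _ x ih =>
      intro hx
      by_cases hx₀ : x = x₀
      · subst hx₀; rfl
      obtain ⟨y, hy, hxy, hlt⟩ := hdesc x hx hx₀
      exact (Adj.reachable (G := G.induce s) (u := ⟨x, hx⟩) (v := ⟨y, hy⟩) hxy).trans (ih y hlt hy)
  rw [connected_iff_exists_forall_reachable]
  exact ⟨⟨x₀, h₀⟩, fun ⟨x, hx⟩ => (hreach x hx).symm⟩

end SimpleGraph

section Attach

variable {n : ℕ} {Vs : Fin n → Type} {H : SimpleGraph (Fin n)} {Gs : ∀ i, SimpleGraph (Vs i)}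
  {u : ∀ i, Vs i}

theorem attachGraph_adj_inr_of_notMem_range {i : Fin n} {v : Vs i}
    {y : Fin n ⊕ ((i : Fin n) × Vs i)} (hadj : (attachGraph H Gs u).Adj (Sum.inr ⟨i, v⟩) y)
    (hy : y ∉ Set.range (Sum.inr ∘ Sigma.mk i)) : v = u i ∧ y = Sum.inl i := by
  rw [attachGraph, SimpleGraph.fromRel_adj] at hadj
  rcases y with j | ⟨j, w⟩
  · obtain ⟨-, h | ⟨rfl, h⟩⟩ := hadj
    · exact h.elim
    · exact ⟨h, rfl⟩
  · obtain ⟨-, ⟨h, -⟩ | ⟨h, -⟩⟩ := hadj <;>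
      · simp only at h
        subst h
        exact (hy ⟨w, rfl⟩).elim

theorem attachGraph_mem_of_induce_connected {s : Set (Fin n ⊕ ((i : Fin n) × Vs i))}
    (hs : ((attachGraph H Gs u).induce s).Connected) {i : Fin n} {v : Vs i}
    (hv : Sum.inr ⟨i, v⟩ ∈ s) {y : Fin n ⊕ ((i : Fin n) × Vs i)} (hy : y ∈ s)
    (hyi : y ∉ Set.range (Sum.inr ∘ Sigma.mk i)) :
    Sum.inl i ∈ s ∧ Sum.inr ⟨i, u i⟩ ∈ s := by
  obtain ⟨p⟩ := hs.preconnected ⟨_, hv⟩ ⟨y, hy⟩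
  obtain ⟨⟨⟨⟨_, hx⟩, ⟨z, hz⟩⟩, hxz⟩, -, ⟨w, rfl⟩, hzi⟩ :=
    p.exists_boundary_dart (Subtype.val ⁻¹' Set.range (Sum.inr ∘ Sigma.mk i)) ⟨v, rfl⟩ hyi
  obtain ⟨rfl, rfl⟩ := attachGraph_adj_inr_of_notMem_range hxz hzi
  exact ⟨hz, hx⟩

end Attach

section CompleteSun

variable {n : ℕ} {lam : Fin n → ℕ}

theorem completeSunGraph_adj_inl_inl {j j' : Fin n} (h : j ≠ j') :
    (completeSunGraph n lam).Adj (Sum.inl j) (Sum.inl j') := by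
  rw [completeSunGraph, SimpleGraph.fromRel_adj]
  exact ⟨by simpa using h, Or.inl h⟩

theorem completeSunGraph_adj_inr_inl {j : Fin n} {b : Fin (lam j)} (hb : (b : ℕ) = 0) :
    (completeSunGraph n lam).Adj (Sum.inr ⟨j, b⟩) (Sum.inl j) := by
  rw [completeSunGraph, SimpleGraph.fromRel_adj]
  exact ⟨by simp, Or.inr ⟨rfl, hb⟩⟩

theorem completeSunGraph_adj_inr_inr {j : Fin n} {b b' : Fin (lam j)} (h : (b : ℕ) = b' + 1) :
    (completeSunGraph n lam).Adj (Sum.inr ⟨j, b⟩) (Sum.inr ⟨j, b'⟩) := by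
  rw [completeSunGraph, SimpleGraph.fromRel_adj]
  refine ⟨?_, Or.inr ⟨rfl, h⟩⟩
  rintro ⟨⟩
  omega

theorem completeSunGraph_induce_connected_of_inl_mem
    {s : Set (Fin n ⊕ ((i : Fin n) × Fin (lam i)))} {i₀ : Fin n} (h₀ : Sum.inl i₀ ∈ s)
    (hinl : ∀ j b, Sum.inr ⟨j, b⟩ ∈ s → Sum.inl j ∈ s)
    (hlower : ∀ j, IsLowerSet {b | Sum.inr ⟨j, b⟩ ∈ s}) :
    ((completeSunGraph n lam).induce s).Connected := by
  refine SimpleGraph.induce_connected_of_descent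
    (Sum.elim (fun j => if j = i₀ then 0 else 1) (fun p => p.2 + 2)) h₀ ?_
  rintro (j | ⟨j, b⟩) hx hne
  · have hj : j ≠ i₀ := fun h => hne (h ▸ rfl)
    exact ⟨_, h₀, completeSunGraph_adj_inl_inl hj, by simp [hj]⟩
  · by_cases hb : (b : ℕ) = 0
    · refine ⟨_, hinl j b hx, completeSunGraph_adj_inr_inl hb, ?_⟩
      simp only [Sum.elim_inl, Sum.elim_inr]
      split_ifs <;> omega
    · let b' : Fin (lam j) := ⟨b - 1, by omega⟩
      refine ⟨Sum.inr ⟨j, b'⟩, hlower j (show b' ≤ b from Fin.le_def.mpr (by simp [b'])) hx,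
        completeSunGraph_adj_inr_inr (by simp [b']; omega), ?_⟩
      simp only [Sum.elim_inr, b']
      omega

theorem completeSunGraph_induce_connected_of_subset_range
    {s : Set (Fin n ⊕ ((i : Fin n) × Fin (lam i)))} {i : Fin n}
    (hs : s ⊆ Set.range (Sum.inr ∘ Sigma.mk i)) (hne : s.Nonempty)
    (hord : {b | Sum.inr ⟨i, b⟩ ∈ s}.OrdConnected) :
    ((completeSunGraph n lam).induce s).Connected := by
  obtain ⟨_, hx⟩ := hne
  obtain ⟨b, rfl⟩ := hs hx
  obtain ⟨m, hm, hmin⟩ :=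
    Set.exists_min_image {b | Sum.inr ⟨i, b⟩ ∈ s} id (Set.toFinite _) ⟨b, by exact hx⟩
  refine SimpleGraph.induce_connected_of_descent (Sum.elim (fun _ => 0) (fun p => p.2)) hm ?_
  intro x hx hne
  obtain ⟨b, rfl⟩ := hs hx
  have hmb : m < b := lt_of_le_of_ne (hmin b hx) (by rintro rfl; exact hne rfl)
  rw [Fin.lt_def] at hmb
  let b' : Fin (lam i) := ⟨b - 1, by omega⟩
  have hb' : b' ∈ Set.Icc m b :=
    ⟨Fin.le_def.mpr (by simp [b']; omega), Fin.le_def.mpr (by simp [b'])⟩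
  exact ⟨Sum.inr ⟨i, b'⟩, hord.out hm hx hb', completeSunGraph_adj_inr_inr (by simp [b']; omega),
    by simp [b']; omega⟩

end CompleteSun

theorem completeSunGraph_induce_connected_of_attachGraph {n : ℕ} {lam : Fin n → ℕ}
    {Vs : Fin n → Type} {H : SimpleGraph (Fin n)} {Gs : ∀ i, SimpleGraph (Vs i)}
    {u : ∀ i, Vs i} (e : ∀ i, Vs i ≃ Fin (lam i)) {s : Set (Fin n ⊕ ((i : Fin n) × Vs i))}
    (hs : ((attachGraph H Gs u).induce s).Connected)
    (hord : ∀ j, {b | Sum.inr ⟨j, (e j).symm b⟩ ∈ s}.OrdConnected)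
    (hlower : ∀ j, Sum.inr ⟨j, u j⟩ ∈ s → IsLowerSet {b | Sum.inr ⟨j, (e j).symm b⟩ ∈ s}) :
    ((completeSunGraph n lam).induce
      ((Equiv.sumCongr (Equiv.refl _) (Equiv.sigmaCongrRight e)).symm ⁻¹' s)).Connected := by
  by_cases hbody : ∃ i₀, Sum.inl i₀ ∈ s
  · obtain ⟨i₀, h₀⟩ := hbody
    have hexit : ∀ j (w : Vs j), Sum.inr ⟨j, w⟩ ∈ s → Sum.inl j ∈ s ∧ Sum.inr ⟨j, u j⟩ ∈ s :=
      fun j w hw => attachGraph_mem_of_induce_connected hs hw h₀ (by rintro ⟨_, ⟨⟩⟩)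
    exact completeSunGraph_induce_connected_of_inl_mem (i₀ := i₀) h₀
      (fun j b hb => (hexit j _ hb).1) (fun j b b' hb' hb => hlower j (hexit j _ hb).2 hb' hb)
  · push Not at hbody
    obtain ⟨⟨j | ⟨i, v⟩, hx⟩⟩ := hs.nonempty
    · exact absurd hx (hbody j)
    refine completeSunGraph_induce_connected_of_subset_range (i := i) ?_
      ⟨Sum.inr ⟨i, e i v⟩, show Sum.inr ⟨i, (e i).symm (e i v)⟩ ∈ s by simpa using hx⟩ (hord i)
    rintro (j | ⟨j, b⟩) hy
    · exact absurd hy (hbody j)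
    obtain rfl : j = i := by
      by_contra hji
      refine hbody i (attachGraph_mem_of_induce_connected hs hx hy ?_).1
      rintro ⟨w, hw⟩
      exact hji (congrArg Sigma.fst (Sum.inr_injective hw)).symm
    exact ⟨b, rfl⟩

theorem completeSun_connectedPartition_of_attach_complete_general (n : ℕ)
    (lam : Fin n → ℕ)
    (Vs : Fin n → Type) [∀ i, Fintype (Vs i)] [∀ i, DecidableEq (Vs i)]
    (Gs : ∀ i, SimpleGraph (Vs i))
    (hcard : ∀ i, Fintype.card (Vs i) = lam i)
    (u : ∀ i, Vs i) (μ : Multiset ℕ)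
    (h : HasConnectedPartition (attachGraph (⊤ : SimpleGraph (Fin n)) Gs u) μ) :
    HasConnectedPartition (completeSunGraph n lam) μ := by
  obtain ⟨P, hP, rfl⟩ := h
  choose e he using fun i => Fintype.exists_equiv_fin_ordConnected_fibers (hcard i)
    (fun v => P.part (Sum.inr ⟨i, v⟩)) (P.part (Sum.inr ⟨i, u i⟩))
  refine ⟨P.mapEquiv (Equiv.sumCongr (Equiv.refl _) (Equiv.sigmaCongrRight e)), ?_, ?_⟩
  · simp only [Finpartition.parts_mapEquiv, Finset.mem_map]
    rintro _ ⟨B, hB, rfl⟩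
    have hmem : ∀ x, x ∈ B ↔ P.part x = B := fun x => (P.part_eq_iff_mem hB).symm
    rw [Equiv.coe_toEmbedding, Equiv.finsetCongr_apply, Finset.coe_map, Equiv.coe_toEmbedding,
      Equiv.image_eq_preimage_symm]
    apply completeSunGraph_induce_connected_of_attachGraph e (hP B hB)
    · intro j
      convert (he j).1 B using 1
      ext
      exact hmem _
    · intro j hj
      convert (hmem _).mp hj ▸ (he j).2 using 1
      ext
      exact hmem _
  · simp [Finpartition.parts_mapEquiv, Multiset.map_map, Function.comp_def]

/-- If `G` is obtained by joining each vertex `v_i` of the complete graph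
`K_n` by an edge to a chosen vertex `u_i` of a connected graph `G_i` on `λ_i` vertices,
and `G` has a connected partition of type `μ`, then so does the complete sun
`S̄(n; λ_1, …, λ_n)`. -/
theorem completeSun_connectedPartition_of_attach_complete (n : ℕ) (hn : 3 ≤ n)
    (lam : Fin n → ℕ) (hpos : ∀ i, 0 < lam i)
    (Vs : Fin n → Type) [∀ i, Fintype (Vs i)] [∀ i, DecidableEq (Vs i)]
    (Gs : ∀ i, SimpleGraph (Vs i)) (hconn : ∀ i, (Gs i).Connected)
    (hcard : ∀ i, Fintype.card (Vs i) = lam i)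
    (u : ∀ i, Vs i) (μ : Multiset ℕ)
    (h : HasConnectedPartition (attachGraph (⊤ : SimpleGraph (Fin n)) Gs u) μ) :
    HasConnectedPartition (completeSunGraph n lam) μ :=
  completeSun_connectedPartition_of_attach_complete_general n lam Vs Gs hcard u μ h
end

section
/- If the sun graphs S(n; λ_1,…,λ_n) and S(m; μ_1,…,μ_m) have the same chromatic symmetric function, then m = n and λ_1 + ⋯ + λ_n = μ_1 + ⋯ + μ_m. -/
def dec3 (a : Fin 3) (t : Fin 2) : Fin 3 := a + ⟨t.val + 1, by omega⟩
def enc3 (a b : Fin 3) : Fin 2 := ⟨min ((b - a).val - 1) 1, by omega⟩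
lemma dec3_ne (a : Fin 3) (t : Fin 2) : dec3 a t ≠ a := by revert a t; decide
lemma dec3_enc3 (a b : Fin 3) (h : b ≠ a) : dec3 a (enc3 a b) = b := by revert a b; decide
lemma enc3_dec3 (a : Fin 3) (t : Fin 2) : enc3 a (dec3 a t) = t := by revert a t; decide

def PthP (k : ℕ) (c : Fin (k+1) → Fin 3) : Prop := ∀ i : Fin k, c i.castSucc ≠ c i.succ
def CycP (n : ℕ) (c : Fin n → Fin 3) : Prop :=
  ∀ i : Fin n, c i ≠ c ⟨(i.val+1) % n, Nat.mod_lt _ i.pos⟩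

lemma card_path (k : ℕ) : Nat.card {c : Fin (k+1) → Fin 3 // PthP k c} = 3 * 2^k := by
  induction k with
  | zero =>
    have e : {c : Fin 1 → Fin 3 // PthP 0 c} ≃ (Fin 1 → Fin 3) :=
      Equiv.subtypeUnivEquiv (fun c i => i.elim0)
    rw [Nat.card_congr e]
    simp [Nat.card_eq_fintype_card]
  | succ k ih =>
    have e : {c : Fin (k+2) → Fin 3 // PthP (k+1) c} ≃
        {c : Fin (k+1) → Fin 3 // PthP k c} × Fin 2 := by
      refine ⟨fun c => (⟨Fin.init c.1, fun i => ?_⟩,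
          enc3 (c.1 (Fin.last k).castSucc) (c.1 (Fin.last (k+1)))),
        fun p => ⟨Fin.snoc p.1.1 (dec3 (p.1.1 (Fin.last k)) p.2), fun i => ?_⟩, ?_, ?_⟩
      · simpa [Fin.init] using c.2 i.castSucc
      · refine Fin.lastCases ?_ (fun j => ?_) i
        · simp only [Fin.succ_last, Fin.snoc_last, Fin.snoc_castSucc]
          exact (dec3_ne _ _).symm
        · simp only [Fin.succ_castSucc, Fin.snoc_castSucc]
          exact p.1.2 j
      · rintro ⟨c, hc⟩
        refine Subtype.ext ?_
        simp only
        have h2 : Fin.init c (Fin.last k) = c (Fin.last k).castSucc := rfl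
        rw [h2]
        have h1 : c (Fin.last (k+1)) ≠ c (Fin.last k).castSucc := by
          simpa [Fin.succ_last] using (hc (Fin.last k)).symm
        rw [dec3_enc3 _ _ h1]
        exact Fin.snoc_init_self c
      · rintro ⟨⟨c, hc⟩, t⟩
        simp only [Fin.init_snoc, Fin.snoc_last, Fin.snoc_castSucc]
        rw [enc3_dec3]
    rw [Nat.card_congr e, Nat.card_prod, ih, Nat.card_eq_fintype_card]
    simp; ring

noncomputable def cyc3card (n : ℕ) : ℕ := Nat.card {c : Fin n → Fin 3 // CycP n c}

lemma cyc3card_one : cyc3card 1 = 0 := by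
  have : IsEmpty {c : Fin 1 → Fin 3 // CycP 1 c} := by
    constructor
    rintro ⟨c, hc⟩
    exact hc ⟨0, one_pos⟩ (congrArg c (Subsingleton.elim _ _))
  simp [cyc3card, Nat.card_of_isEmpty]

lemma cyc_rec (k : ℕ) (hk : 1 ≤ k) : cyc3card (k+1) + cyc3card k = 3 * 2^k := by
  classical
  have eCyc : {c : Fin (k+1) → Fin 3 // PthP k c ∧ c (Fin.last k) ≠ c ⟨0, k.succ_pos⟩} ≃
      {c : Fin (k+1) → Fin 3 // CycP (k+1) c} := by
    refine Equiv.subtypeEquivRight (fun c => ?_)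
    constructor
    · rintro ⟨hp, hne⟩ i
      refine Fin.lastCases ?_ (fun j => ?_) i
      · have : (⟨((Fin.last k).val + 1) % (k+1), Nat.mod_lt _ (Fin.last k).pos⟩ : Fin (k+1))
            = ⟨0, k.succ_pos⟩ := by
          ext; simp
        rw [this]; exact hne
      · have : (⟨(j.castSucc.val + 1) % (k+1), Nat.mod_lt _ j.castSucc.pos⟩ : Fin (k+1))
            = j.succ := by
          ext; simp [Nat.mod_eq_of_lt (by omega : j.val + 1 < k + 1)]
        rw [this]; exact hp j
    · intro hc
      constructor
      · intro j
        have := hc j.castSucc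
        have h2 : (⟨(j.castSucc.val + 1) % (k+1), Nat.mod_lt _ j.castSucc.pos⟩ : Fin (k+1))
            = j.succ := by
          ext; simp [Nat.mod_eq_of_lt (by omega : j.val + 1 < k + 1)]
        rwa [h2] at this
      · have := hc (Fin.last k)
        have h2 : (⟨((Fin.last k).val + 1) % (k+1), Nat.mod_lt _ (Fin.last k).pos⟩ : Fin (k+1))
            = ⟨0, k.succ_pos⟩ := by
          ext; simp
        rwa [h2] at this
  have eQ : {c : Fin (k+1) → Fin 3 // PthP k c ∧ c (Fin.last k) = c ⟨0, k.succ_pos⟩} ≃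
      {c : Fin k → Fin 3 // CycP k c} := by
    refine ⟨fun c => ⟨fun j => c.1 j.castSucc, ?_⟩,
      fun c' => ⟨Fin.snoc c'.1 (c'.1 ⟨0, hk⟩), ?_, ?_⟩, ?_, ?_⟩
    · intro i
      obtain ⟨c, hp, hB⟩ := c
      simp only
      by_cases hlt : i.val + 1 < k
      · have h2 : ((⟨(i.val + 1) % k, Nat.mod_lt _ i.pos⟩ : Fin k)).castSucc = i.succ := by
          ext; simp [Nat.mod_eq_of_lt hlt]
        rw [h2]; exact hp i
      · have hik : i.val + 1 = k := by omega
        have h2 : ((⟨(i.val + 1) % k, Nat.mod_lt _ i.pos⟩ : Fin k)).castSucc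
            = (⟨0, k.succ_pos⟩ : Fin (k+1)) := by
          ext; simp [hik]
        rw [h2, ← hB]
        have h3 : Fin.last k = i.succ := by ext; simp [← hik]
        rw [h3]; exact hp i
    · intro i
      obtain ⟨c', hc'⟩ := c'
      simp only [Fin.snoc_castSucc]
      by_cases hlt : i.val + 1 < k
      · have h2 : i.succ = ((⟨(i.val + 1) % k, Nat.mod_lt _ i.pos⟩ : Fin k)).castSucc := by
          ext; simp [Nat.mod_eq_of_lt hlt]
        rw [h2, Fin.snoc_castSucc]; exact hc' i
      · have hik : i.val + 1 = k := by omega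
        have h2 : i.succ = Fin.last k := by ext; simp [← hik]
        rw [h2, Fin.snoc_last]
        have h3 : (⟨(i.val + 1) % k, Nat.mod_lt _ i.pos⟩ : Fin k) = ⟨0, hk⟩ := by
          ext; simp [hik]
        have := hc' i
        rwa [h3] at this
    · obtain ⟨c', hc'⟩ := c'
      simp only [Fin.snoc_last]
      have h2 : (⟨0, k.succ_pos⟩ : Fin (k+1)) = ((⟨0, hk⟩ : Fin k)).castSucc := by ext; simp
      rw [h2, Fin.snoc_castSucc]
    · rintro ⟨c, hp, hB⟩
      refine Subtype.ext ?_
      simp only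
      funext i
      refine Fin.lastCases ?_ (fun j => ?_) i
      · rw [Fin.snoc_last, hB]
        exact congrArg c (Fin.ext rfl)
      · rw [Fin.snoc_castSucc]
    · rintro ⟨c', hc'⟩
      refine Subtype.ext ?_
      funext j
      simp [Fin.snoc_castSucc]
  have hsplit : Nat.card {c : Fin (k+1) → Fin 3 // PthP k c} =
      cyc3card (k+1) + cyc3card k := by
    have e1 : {c : Fin (k+1) → Fin 3 // PthP k c} ≃
        {x : {c : Fin (k+1) → Fin 3 // PthP k c} // ¬ (x.1 (Fin.last k) = x.1 ⟨0, k.succ_pos⟩)}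
        ⊕ {x : {c : Fin (k+1) → Fin 3 // PthP k c} // x.1 (Fin.last k) = x.1 ⟨0, k.succ_pos⟩} :=
      (Equiv.sumCompl _).symm.trans (Equiv.sumComm _ _)
    rw [Nat.card_congr e1, Nat.card_sum]
    have e2 := (Equiv.subtypeSubtypeEquivSubtypeInter (fun c : Fin (k+1) → Fin 3 => PthP k c)
      (fun c => ¬ (c (Fin.last k) = c ⟨0, k.succ_pos⟩))).trans eCyc
    have e3 := (Equiv.subtypeSubtypeEquivSubtypeInter (fun c : Fin (k+1) → Fin 3 => PthP k c)
      (fun c => c (Fin.last k) = c ⟨0, k.succ_pos⟩)).trans eQ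
    rw [Nat.card_congr e2, Nat.card_congr e3]
    rfl
  rw [← hsplit, card_path]

lemma cyc3_formula : ∀ n, 1 ≤ n → (cyc3card n : ℤ) = 2^n + 2 * (-1)^n := by
  intro n
  induction n with
  | zero => omega
  | succ k ih =>
    intro _
    rcases Nat.eq_or_lt_of_le (Nat.one_le_iff_ne_zero.mpr (Nat.succ_ne_zero k)) with h1 | h1
    · have hk0 : k = 0 := by omega
      subst hk0
      simp [cyc3card_one]
    · have hk : 1 ≤ k := by omega
      have hrec := cyc_rec k hk
      have : (cyc3card (k+1) : ℤ) + cyc3card k = 3 * 2^k := by exact_mod_cast hrec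
      rw [ih hk] at this
      have h2 : (cyc3card (k+1) : ℤ) = 3 * 2^k - (2^k + 2*(-1)^k) := by linarith
      rw [h2]; ring

def ext2 {l : ℕ} (u : Fin l → Fin 2) : ℕ → Fin 2 := fun j => if h : j < l then u ⟨j, h⟩ else 0

def rayCol (a : Fin 3) (g : ℕ → Fin 2) : ℕ → Fin 3
  | 0 => dec3 a (g 0)
  | j+1 => dec3 (rayCol a g j) (g (j+1))

def prevC {n : ℕ} {lam : Fin n → ℕ} (κ : (Fin n ⊕ ((i : Fin n) × Fin (lam i))) → Fin 3)
    (i : Fin n) (j : Fin (lam i)) : Fin 3 :=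
  if j.val = 0 then κ (Sum.inl i) else κ (Sum.inr ⟨i, ⟨j.val - 1, by omega⟩⟩)

lemma sun_proper_iff (n : ℕ) (hn : 2 ≤ n) (lam : Fin n → ℕ)
    (κ : (Fin n ⊕ ((i : Fin n) × Fin (lam i))) → Fin 3) :
    (∀ u v, (sunGraph n lam).Adj u v → κ u ≠ κ v) ↔
      (CycP n (fun i => κ (Sum.inl i))) ∧
      (∀ (i : Fin n) (h : 0 < lam i), κ (Sum.inl i) ≠ κ (Sum.inr ⟨i, ⟨0, h⟩⟩)) ∧
      (∀ (i : Fin n) (j : ℕ) (h : j + 1 < lam i),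
        κ (Sum.inr ⟨i, ⟨j, by omega⟩⟩) ≠ κ (Sum.inr ⟨i, ⟨j+1, h⟩⟩)) := by
  constructor
  · intro hp
    refine ⟨fun i => ?_, fun i h => ?_, fun i j h => ?_⟩
    · refine hp _ _ ?_
      rw [sunGraph, SimpleGraph.fromRel_adj]
      constructor
      · intro heq
        have := congrArg (fun x => match x with | Sum.inl a => a.val | Sum.inr _ => 0) heq
        simp at this
        rcases Nat.lt_or_ge (i.val + 1) n with h1 | h1
        · rw [Nat.mod_eq_of_lt h1] at this; omega
        · have h2 : i.val + 1 = n := by omega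
          rw [h2, Nat.mod_self] at this
          omega
      · left
        simp [sunRel]
    · refine hp _ _ ?_
      rw [sunGraph, SimpleGraph.fromRel_adj]
      exact ⟨by simp, Or.inl ⟨rfl, rfl⟩⟩
    · refine hp _ _ ?_
      rw [sunGraph, SimpleGraph.fromRel_adj]
      constructor
      · intro heq
        have := congrArg (fun x => match x with | Sum.inl _ => 0 | Sum.inr p => p.2.val) heq
        simp at this
      · left
        exact ⟨rfl, rfl⟩
  · rintro ⟨h1, h2, h3⟩ u v hadj
    rw [sunGraph, SimpleGraph.fromRel_adj] at hadj
    obtain ⟨hne, hrel | hrel⟩ := hadj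
    · revert hne
      match u, v with
      | Sum.inl i, Sum.inl i' =>
        intro hne
        have hv : i' = ⟨(i.val + 1) % n, Nat.mod_lt _ i.pos⟩ := Fin.ext hrel
        rw [hv]
        exact h1 i
      | Sum.inl i, Sum.inr ⟨qi, qj⟩ =>
        intro hne
        obtain ⟨hq1, hq2⟩ := hrel
        subst hq1
        have hj : qj = ⟨0, qj.pos⟩ := Fin.ext hq2
        rw [hj]
        exact h2 qi qj.pos
      | Sum.inr ⟨pi, pj⟩, Sum.inr ⟨qi, qj⟩ =>
        intro hne
        obtain ⟨hq1, hq2⟩ := hrel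
        replace hq1 : pi = qi := hq1
        subst hq1
        replace hq2 : qj.val = pj.val + 1 := hq2
        have hlt : pj.val + 1 < lam pi := hq2 ▸ qj.isLt
        have hp' : pj = ⟨pj.val, by omega⟩ := Fin.ext rfl
        have hq' : qj = ⟨pj.val + 1, hlt⟩ := Fin.ext hq2
        rw [hq']
        conv_lhs => rw [hp']
        exact h3 pi pj.val hlt
    · refine Ne.symm ?_
      revert hne
      match u, v with
      | Sum.inl i', Sum.inl i =>
        intro hne
        have hv : i' = ⟨(i.val + 1) % n, Nat.mod_lt _ i.pos⟩ := Fin.ext hrel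
        rw [hv]
        exact h1 i
      | Sum.inr ⟨qi, qj⟩, Sum.inl i =>
        intro hne
        obtain ⟨hq1, hq2⟩ := hrel
        subst hq1
        have hj : qj = ⟨0, qj.pos⟩ := Fin.ext hq2
        rw [hj]
        exact h2 qi qj.pos
      | Sum.inr ⟨qi, qj⟩, Sum.inr ⟨pi, pj⟩ =>
        intro hne
        obtain ⟨hq1, hq2⟩ := hrel
        replace hq1 : pi = qi := hq1
        subst hq1
        replace hq2 : qj.val = pj.val + 1 := hq2
        have hlt : pj.val + 1 < lam pi := hq2 ▸ qj.isLt
        have hp' : pj = ⟨pj.val, by omega⟩ := Fin.ext rfl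
        have hq' : qj = ⟨pj.val + 1, hlt⟩ := Fin.ext hq2
        rw [hq']
        conv_lhs => rw [hp']
        exact h3 pi pj.val hlt

lemma ray_decode {n : ℕ} (hn : 2 ≤ n) {lam : Fin n → ℕ}
    (κ : (Fin n ⊕ ((i : Fin n) × Fin (lam i))) → Fin 3)
    (hκ : ∀ u v, (sunGraph n lam).Adj u v → κ u ≠ κ v) (i : Fin n) :
    ∀ (jv : ℕ) (hj : jv < lam i),
      rayCol (κ (Sum.inl i))
        (ext2 (fun j : Fin (lam i) => enc3 (prevC κ i j) (κ (Sum.inr ⟨i, j⟩)))) jv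
        = κ (Sum.inr ⟨i, ⟨jv, hj⟩⟩) := by
  obtain ⟨h1, h2, h3⟩ := (sun_proper_iff n hn lam κ).mp hκ
  intro jv
  induction jv with
  | zero =>
    intro hj
    show dec3 _ _ = _
    rw [ext2]
    rw [dif_pos hj]
    have hprev : prevC κ i ⟨0, hj⟩ = κ (Sum.inl i) := by simp [prevC]
    rw [hprev]
    exact dec3_enc3 _ _ (h2 i hj).symm
  | succ jv ih =>
    intro hj
    have hjv : jv < lam i := by omega
    show dec3 (rayCol _ _ jv) _ = _
    rw [ih hjv, ext2, dif_pos hj]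
    have hprev : prevC κ i ⟨jv + 1, hj⟩ = κ (Sum.inr ⟨i, ⟨jv, hjv⟩⟩) := by
      rw [prevC, if_neg (Nat.succ_ne_zero jv)]
      simp
    rw [hprev]
    exact dec3_enc3 _ _ (h3 i jv hj).symm

lemma sun_card (n : ℕ) (hn : 2 ≤ n) (lam : Fin n → ℕ) :
    Nat.card {κ : (Fin n ⊕ ((i : Fin n) × Fin (lam i))) → Fin 3 //
      ∀ u v, (sunGraph n lam).Adj u v → κ u ≠ κ v} = cyc3card n * 2 ^ (∑ i, lam i) := by
  classical
  have E : {κ : (Fin n ⊕ ((i : Fin n) × Fin (lam i))) → Fin 3 //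
        ∀ u v, (sunGraph n lam).Adj u v → κ u ≠ κ v} ≃
      ({c : Fin n → Fin 3 // CycP n c} × ((i : Fin n) → Fin (lam i) → Fin 2)) := by
    refine ⟨fun κ => (⟨fun i => κ.1 (Sum.inl i), ((sun_proper_iff n hn lam κ.1).mp κ.2).1⟩,
        fun i j => enc3 (prevC κ.1 i j) (κ.1 (Sum.inr ⟨i, j⟩))),
      fun cf => ⟨Sum.elim cf.1.1 (fun p => rayCol (cf.1.1 p.1) (ext2 (cf.2 p.1)) p.2.val), ?_⟩,
      ?_, ?_⟩
    · rw [sun_proper_iff n hn lam]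
      refine ⟨cf.1.2, fun i h => ?_, fun i j h => ?_⟩
      · exact (dec3_ne _ _).symm
      · exact (dec3_ne _ _).symm
    · rintro ⟨κ, hκ⟩
      refine Subtype.ext (funext ?_)
      rintro (i | ⟨i, ⟨jv, hj⟩⟩)
      · rfl
      · exact ray_decode hn κ hκ i jv hj
    · rintro ⟨⟨c, hc⟩, f⟩
      refine Prod.ext (Subtype.ext (funext fun i => rfl)) (funext fun i => funext fun j => ?_)
      obtain ⟨jv, hj⟩ := j
      cases jv with
      | zero =>
        have hprev : prevC (Sum.elim c (fun p => rayCol (c p.1) (ext2 (f p.1)) p.2.val)) i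
            ⟨0, hj⟩ = c i := by simp [prevC]
        show enc3 _ (dec3 _ _) = _
        rw [hprev, enc3_dec3, ext2, dif_pos hj]
      | succ jv =>
        have hprev : prevC (Sum.elim c (fun p => rayCol (c p.1) (ext2 (f p.1)) p.2.val)) i
            ⟨jv + 1, hj⟩ = rayCol (c i) (ext2 (f i)) jv := by
          rw [prevC, if_neg (Nat.succ_ne_zero jv)]
          simp
        show enc3 _ (dec3 _ _) = _
        rw [hprev, enc3_dec3, ext2, dif_pos hj]
  rw [Nat.card_congr E, Nat.card_prod, Nat.card_pi]
  have hterm : ∀ i : Fin n, Nat.card (Fin (lam i) → Fin 2) = 2 ^ lam i := by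
    intro i
    rw [Nat.card_eq_fintype_card]
    simp
  rw [Finset.prod_congr rfl (fun i _ => hterm i), Finset.prod_pow_eq_pow_sum]
  rfl

noncomputable def dN (N : ℕ) : ℕ →₀ ℕ :=
  Finsupp.onFinset (Finset.range N) (fun i => if i < N then 1 else 0)
    (by intro a ha; simp only [Finset.mem_range]; by_contra hc; simp [if_neg hc] at ha)

lemma dN_apply (N i : ℕ) : dN N i = if i < N then 1 else 0 := rfl

lemma finite_aux {V : Type} [Fintype V] (G : SimpleGraph V) (d : ℕ → ℕ) (x : ℕ)
    (hd : ∀ i, x ≤ i → d i = 0) :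
    Finite {κ : V → ℕ // (∀ u v, G.Adj u v → κ u ≠ κ v) ∧
      ∀ i : ℕ, Nat.card {v : V // κ v = i} = d i} := by
  have hbd : ∀ (κ : {κ : V → ℕ // (∀ u v, G.Adj u v → κ u ≠ κ v) ∧
      ∀ i : ℕ, Nat.card {v : V // κ v = i} = d i}) (v : V), κ.1 v < x := by
    intro κp v
    by_contra hge
    have h0 : d (κp.1 v) = 0 := hd _ (le_of_not_gt hge)
    have h1 : Nat.card {w : V // κp.1 w = κp.1 v} ≠ 0 :=
      Nat.card_ne_zero.mpr ⟨⟨v, rfl⟩, inferInstance⟩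
    rw [κp.2.2 (κp.1 v)] at h1
    exact h1 h0
  refine Finite.of_injective (fun κ => fun v => (⟨κ.1 v, hbd κ v⟩ : Fin x)) ?_
  intro a b hab
  refine Subtype.ext (funext fun v => ?_)
  exact congrArg Fin.val (congrFun hab v)

lemma csf_dN_ne_zero {V : Type} [Fintype V] (G : SimpleGraph V) :
    csf G (dN (Fintype.card V)) ≠ 0 := by
  classical
  set N := Fintype.card V with hN
  let e := Fintype.equivFin V
  have hmem : (∀ u v, G.Adj u v → (fun v => ((e v : Fin N) : ℕ)) u ≠ (fun v => ((e v : Fin N) : ℕ)) v) ∧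
      ∀ i : ℕ, Nat.card {v : V // ((e v : Fin N) : ℕ) = i} = dN N i := by
    constructor
    · intro u v hadj heq
      exact G.ne_of_adj hadj (e.injective (Fin.ext heq))
    · intro i
      rw [dN_apply]
      by_cases hi : i < N
      · rw [if_pos hi]
        have E2 : {v : V // ((e v : Fin N) : ℕ) = i} ≃ {b : Fin N // (b : ℕ) = i} :=
          e.subtypeEquiv (fun v => Iff.rfl)
        rw [Nat.card_congr E2]
        haveI : Unique {b : Fin N // (b : ℕ) = i} :=
          ⟨⟨⟨⟨i, hi⟩, rfl⟩⟩, by rintro ⟨b, hb⟩; exact Subtype.ext (Fin.ext hb)⟩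
        exact Nat.card_unique
      · rw [if_neg hi]
        haveI : IsEmpty {v : V // ((e v : Fin N) : ℕ) = i} := by
          constructor
          rintro ⟨v, hv⟩
          exact hi (hv ▸ (e v).isLt)
        exact Nat.card_of_isEmpty
  have hfin : Finite {κ : V → ℕ // (∀ u v, G.Adj u v → κ u ≠ κ v) ∧
      ∀ i : ℕ, Nat.card {v : V // κ v = i} = dN N i} := by
    refine finite_aux G _ (N + 1) (fun i hi => ?_)
    rw [dN_apply, if_neg (by omega)]
  have hne : Nat.card {κ : V → ℕ // (∀ u v, G.Adj u v → κ u ≠ κ v) ∧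
      ∀ i : ℕ, Nat.card {v : V // κ v = i} = dN N i} ≠ 0 :=
    Nat.card_ne_zero.mpr ⟨⟨⟨fun v => ((e v : Fin N) : ℕ), hmem⟩⟩, hfin⟩
  show ((Nat.card _ : ℕ) : ℚ) ≠ 0
  exact_mod_cast hne

lemma card_eq_of_csf_dN {V : Type} [Fintype V] (G : SimpleGraph V) (N : ℕ)
    (h : csf G (dN N) ≠ 0) : Fintype.card V = N := by
  classical
  have hne : Nat.card {κ : V → ℕ // (∀ u v, G.Adj u v → κ u ≠ κ v) ∧
      ∀ i : ℕ, Nat.card {v : V // κ v = i} = dN N i} ≠ 0 := by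
    intro h0
    exact h (by show ((Nat.card _ : ℕ) : ℚ) = 0; rw [h0]; simp)
  obtain ⟨⟨κ, hp, hc⟩⟩ := (Nat.card_ne_zero.mp hne).1
  have hbd : ∀ v : V, κ v < N := by
    intro v
    by_contra hge
    have h1 : Nat.card {w : V // κ w = κ v} ≠ 0 :=
      Nat.card_ne_zero.mpr ⟨⟨v, rfl⟩, inferInstance⟩
    rw [hc (κ v), dN_apply, if_neg (by omega)] at h1
    exact h1 rfl
  have hbij : Function.Bijective (fun v => (⟨κ v, hbd v⟩ : Fin N)) := by
    constructor
    · intro u v huv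
      have hval : κ u = κ v := congrArg Fin.val huv
      have h1 : Nat.card {w : V // κ w = κ u} = 1 := by
        rw [hc (κ u), dN_apply, if_pos (hbd u)]
      obtain ⟨hsub, -⟩ := Nat.card_eq_one_iff_unique.mp h1
      have := hsub.elim (⟨u, rfl⟩ : {w : V // κ w = κ u}) ⟨v, hval.symm⟩
      exact congrArg Subtype.val this
    · intro b
      have h1 : Nat.card {w : V // κ w = (b : ℕ)} ≠ 0 := by
        rw [hc (b : ℕ), dN_apply, if_pos b.isLt]
        exact one_ne_zero
      obtain ⟨⟨v, hv⟩⟩ := (Nat.card_ne_zero.mp h1).1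
      exact ⟨v, Fin.ext hv⟩
  rw [Fintype.card_of_bijective hbij, Fintype.card_fin]

noncomputable def df (N : ℕ) (f : Fin 3 → Fin (N+1)) : ℕ →₀ ℕ :=
  Finsupp.onFinset (Finset.range 3) (fun i => if h : i < 3 then (f ⟨i, h⟩ : ℕ) else 0)
    (by intro a ha; simp only [Finset.mem_range]; by_contra hc; exact ha (by simp [hc]))

lemma df_apply (N : ℕ) (f : Fin 3 → Fin (N+1)) (i : ℕ) :
    df N f i = if h : i < 3 then (f ⟨i, h⟩ : ℕ) else 0 := rfl

lemma count3 {V : Type} [Fintype V] (G : SimpleGraph V) (N : ℕ) (hNV : Fintype.card V = N) :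
    ((Nat.card {κ : V → Fin 3 // ∀ u v, G.Adj u v → κ u ≠ κ v} : ℕ) : ℚ)
      = ∑ f : Fin 3 → Fin (N+1), csf G (df N f) := by
  classical
  have hbound : ∀ (κ : V → Fin 3) (j : ℕ), Nat.card {v : V // (κ v : ℕ) = j} ≤ N := by
    intro κ j
    calc Nat.card {v : V // (κ v : ℕ) = j} ≤ Nat.card V :=
          Nat.card_le_card_of_injective _ Subtype.val_injective
      _ = N := by rw [Nat.card_eq_fintype_card, hNV]
  set φ : {κ : V → Fin 3 // ∀ u v, G.Adj u v → κ u ≠ κ v} → (Fin 3 → Fin (N+1)) :=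
    fun κp j => ⟨Nat.card {v : V // (κp.1 v : ℕ) = (j : ℕ)}, Nat.lt_succ_of_le (hbound _ _)⟩
    with hφ
  have hcard : Fintype.card {κ : V → Fin 3 // ∀ u v, G.Adj u v → κ u ≠ κ v}
      = ∑ f : Fin 3 → Fin (N+1), Fintype.card {x // φ x = f} := by
    have h1 := Finset.card_eq_sum_card_fiberwise
      (f := φ) (s := Finset.univ) (t := Finset.univ) (fun x _ => Finset.mem_univ _)
    rw [show Fintype.card {κ : V → Fin 3 // ∀ u v, G.Adj u v → κ u ≠ κ v}
      = (Finset.univ : Finset {κ : V → Fin 3 // ∀ u v, G.Adj u v → κ u ≠ κ v}).card from rfl, h1]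
    refine Finset.sum_congr rfl (fun f _ => ?_)
    rw [Fintype.card_subtype]
  have Ef : ∀ f : Fin 3 → Fin (N+1),
      {x : {κ : V → Fin 3 // ∀ u v, G.Adj u v → κ u ≠ κ v} // φ x = f} ≃
      {κ : V → ℕ // (∀ u v, G.Adj u v → κ u ≠ κ v) ∧
        ∀ i : ℕ, Nat.card {v : V // κ v = i} = df N f i} := by
    intro f
    have hv3 : ∀ (y : {κ : V → ℕ // (∀ u v, G.Adj u v → κ u ≠ κ v) ∧
        ∀ i : ℕ, Nat.card {v : V // κ v = i} = df N f i}) (v : V), y.1 v < 3 := by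
      intro y v
      by_contra hge
      have h1 := y.2.2 (y.1 v)
      rw [df_apply, dif_neg hge] at h1
      have h2 : Nat.card {w : V // y.1 w = y.1 v} ≠ 0 :=
        Nat.card_ne_zero.mpr ⟨⟨v, rfl⟩, inferInstance⟩
      exact h2 h1
    refine ⟨fun x => ⟨fun v => (x.1.1 v : ℕ), ?_, ?_⟩,
      fun y => ⟨⟨fun v => ⟨y.1 v, hv3 y v⟩,
        fun u v hadj heq => y.2.1 u v hadj (congrArg Fin.val heq)⟩, by
          funext j
          refine Fin.ext ?_
          have h1 := y.2.2 (j : ℕ)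
          rw [df_apply, dif_pos j.isLt] at h1
          exact h1⟩,
      fun x => Subtype.ext (Subtype.ext (funext fun v => Fin.ext rfl)),
      fun y => Subtype.ext (funext fun v => rfl)⟩
    · intro u v hadj heq
      exact x.1.2 u v hadj (Fin.ext heq)
    · intro i
      rw [df_apply]
      by_cases hi : i < 3
      · rw [dif_pos hi]
        exact congrArg Fin.val (congrFun x.2 ⟨i, hi⟩)
      · rw [dif_neg hi]
        haveI : IsEmpty {v : V // ((x.1.1 v : ℕ)) = i} := by
          constructor
          rintro ⟨v, hv⟩
          exact hi (hv ▸ (x.1.1 v).isLt)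
        exact Nat.card_of_isEmpty
  rw [Nat.card_eq_fintype_card, hcard, Nat.cast_sum]
  refine Finset.sum_congr rfl (fun f _ => ?_)
  show ((Fintype.card {x // φ x = f} : ℕ) : ℚ) = ((Nat.card _ : ℕ) : ℚ)
  rw [← Nat.card_eq_fintype_card, Nat.card_congr (Ef f)]

lemma odd_pow2_cancel {a b : ℤ} {s t : ℕ} (ha : Odd a) (hb : Odd b)
    (h : a * 2 ^ s = b * 2 ^ t) : s = t := by
  have key : ∀ {x y : ℤ} {u : ℕ}, Odd x → x = y * 2 ^ u → u = 0 := by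
    intro x y u hx hxy
    by_contra hu
    obtain ⟨u', rfl⟩ : ∃ u', u = u' + 1 := ⟨u - 1, by omega⟩
    have h2 : Even x := by
      rw [hxy, pow_succ, ← mul_assoc]
      exact ⟨y * 2 ^ u', by ring⟩
    exact (Int.not_odd_iff_even.mpr h2) hx
  rcases le_total s t with hle | hle
  · have h2 : a * 2 ^ s = b * 2 ^ (t - s) * 2 ^ s := by
      rw [mul_assoc, ← pow_add]
      rw [Nat.sub_add_cancel hle, h]
    have h3 : a = b * 2 ^ (t - s) :=
      mul_right_cancel₀ (pow_ne_zero _ two_ne_zero) h2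
    have := key ha h3
    omega
  · have h2 : b * 2 ^ t = a * 2 ^ (s - t) * 2 ^ t := by
      rw [mul_assoc, ← pow_add]
      rw [Nat.sub_add_cancel hle, h]
    have h3 : b = a * 2 ^ (s - t) :=
      mul_right_cancel₀ (pow_ne_zero _ two_ne_zero) h2
    have := key hb h3
    omega

/-- If two sun graphs `S(n; λ_1, …, λ_n)` and `S(m; μ_1, …, μ_m)` have the
same chromatic symmetric function, then `m = n` and `λ_1 + ⋯ + λ_n = μ_1 + ⋯ + μ_m`. -/
theorem sun_csf_determines_size (n m : ℕ) (hn : 3 ≤ n) (hm : 3 ≤ m)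
    (lam : Fin n → ℕ) (hlam : ∀ i, 0 < lam i)
    (mu : Fin m → ℕ) (hmu : ∀ j, 0 < mu j)
    (h : csf (sunGraph n lam) = csf (sunGraph m mu)) :
    m = n ∧ ∑ i, lam i = ∑ j, mu j := by
  have hcard1 : Fintype.card (Fin n ⊕ ((i : Fin n) × Fin (lam i))) = n + ∑ i, lam i := by
    simp
  have hcard2 : Fintype.card (Fin m ⊕ ((j : Fin m) × Fin (mu j))) = m + ∑ j, mu j := by
    simp
  -- total vertex count is determined
  have h1 := csf_dN_ne_zero (sunGraph n lam)
  rw [h] at h1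
  have hc2 := card_eq_of_csf_dN (sunGraph m mu) _ h1
  have hNN : m + ∑ j, mu j = n + ∑ i, lam i := by rw [← hcard2, hc2, hcard1]
  -- number of proper 3-colourings is determined
  have hcnt1 := count3 (sunGraph n lam) (n + ∑ i, lam i) hcard1
  have hcnt2 := count3 (sunGraph m mu) (n + ∑ i, lam i) (by rw [hcard2, hNN])
  rw [h] at hcnt1
  rw [← hcnt2] at hcnt1
  have hcnt : Nat.card {κ : (Fin n ⊕ ((i : Fin n) × Fin (lam i))) → Fin 3 //
        ∀ u v, (sunGraph n lam).Adj u v → κ u ≠ κ v}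
      = Nat.card {κ : (Fin m ⊕ ((j : Fin m) × Fin (mu j))) → Fin 3 //
        ∀ u v, (sunGraph m mu).Adj u v → κ u ≠ κ v} := by
    exact_mod_cast hcnt1
  have h2n : 2 ≤ n := Nat.le_of_succ_le hn
  have h2m : 2 ≤ m := Nat.le_of_succ_le hm
  rw [sun_card n h2n lam, sun_card m h2m mu] at hcnt
  -- pass to ℤ and use the cycle formula
  have hz : (2 ^ (n-1) + (-1 : ℤ) ^ n) * 2 ^ (∑ i, lam i + 1)
      = (2 ^ (m-1) + (-1 : ℤ) ^ m) * 2 ^ (∑ j, mu j + 1) := by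
    have hzc : (cyc3card n : ℤ) * 2 ^ (∑ i, lam i) = (cyc3card m : ℤ) * 2 ^ (∑ j, mu j) := by
      exact_mod_cast hcnt
    rw [cyc3_formula n (by omega), cyc3_formula m (by omega)] at hzc
    have hn2 : (2 : ℤ) ^ n = 2 * 2 ^ (n - 1) := by
      rw [← pow_succ']
      congr 1
      omega
    have hm2 : (2 : ℤ) ^ m = 2 * 2 ^ (m - 1) := by
      rw [← pow_succ']
      congr 1
      omega
    rw [hn2, hm2] at hzc
    rw [pow_succ, pow_succ]
    linarith
  have hoddgen : ∀ k : ℕ, 1 ≤ k → ∀ e : ℕ, Odd ((2 : ℤ) ^ k + (-1 : ℤ) ^ e) := by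
    intro k hk e
    obtain ⟨k', rfl⟩ : ∃ k', k = k' + 1 := ⟨k - 1, by omega⟩
    have he : Even ((2 : ℤ) ^ (k' + 1)) := ⟨2 ^ k', by ring⟩
    exact he.add_odd (Odd.pow ⟨-1, by ring⟩)
  have hodd1 : Odd ((2 : ℤ) ^ (n-1) + (-1 : ℤ) ^ n) := hoddgen _ (by omega) _
  have hodd2 : Odd ((2 : ℤ) ^ (m-1) + (-1 : ℤ) ^ m) := hoddgen _ (by omega) _
  have hsum : ∑ i, lam i = ∑ j, mu j := by
    have := odd_pow2_cancel hodd1 hodd2 hz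
    omega
  exact ⟨by omega, hsum⟩
end

section
/- For every m ≥ 3, n ≥ 3 and l ≥ −1, the chromatic symmetric functions satisfy X_{D(m, l, n)} = (m−1)·X_{T_{n, m+l}} − Σ_{k=1}^{m−2} X_{T_{n, l+k}}·X_{C_{m−k}}, where in the sum the cycle C_2 is identified with the path P_2 and T_{n,0} is identified with C_n. -/
/-!
Number the dumbbell `D = D(m, l, n)` so that `C_m` is `0, …, m-1` and let `T` be `D` without the
chord `{0, m-1}`; `T` is the tadpole `T_{n, m+l}`. Let `c_q` be the sum of `x^κ` over the proper
colourings of `T` with `κ 0 = κ (q-1)`. Deleting the chord gives `X_D = X_T - c_m`. For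
`2 ≤ q < m` let `H_q` be `T` with the edge `{q-1, q}` replaced by the chord `{0, q-1}`, so that
`H_q = T_{n, l+m-q} ⊔ C_q`. Deletion–contraction on `{q-1, q}` gives
`X_{H_q} = X_T - c_q + c_{q+1}`: rotating `C_q` turns the contracted term into a sum over colourings
with `κ 0 = κ q`, and for those the edges `{0, q-1}` and `{q-1, q}` impose the same constraint.
Summing over `q` telescopes, and `c_2 = 0` because `0` and `1` are adjacent in `T`.
-/

namespace ChromaticSymmetric

open SimpleGraph Finset

noncomputable section

section Weight

variable {V W : Type} [Fintype V] [Fintype W]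

def weight (κ : V → ℕ) : ℕ →₀ ℕ := ∑ v, Finsupp.single (κ v) 1

theorem weight_apply (κ : V → ℕ) (i : ℕ) : weight κ i = Nat.card {v // κ v = i} := by
  classical
  rw [Nat.card_eq_fintype_card, Fintype.card_subtype, Finset.card_filter, weight,
    Finsupp.finsetSum_apply]
  exact Finset.sum_congr rfl fun v _ => Finsupp.single_apply

theorem weight_comp_equiv (e : W ≃ V) (κ : V → ℕ) : weight (κ ∘ e) = weight κ :=
  e.sum_comp fun v => Finsupp.single (κ v) 1

theorem weight_sum_type (κ : V ⊕ W → ℕ) :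
    weight κ = weight (κ ∘ Sum.inl) + weight (κ ∘ Sum.inr) :=
  Fintype.sum_sum_type _

theorem finite_weight_preimage (d : ℕ →₀ ℕ) : (weight ⁻¹' {d} : Set (V → ℕ)).Finite := by
  refine (Set.Finite.pi' fun _ => d.support.finite_toSet).subset fun κ hκ v => ?_
  have : Nonempty {w // κ w = κ v} := ⟨⟨v, rfl⟩⟩
  have : weight κ (κ v) ≠ 0 := by
    rw [weight_apply]
    exact Nat.card_pos.ne'
  simpa [show weight κ = d from hκ] using this

def genFun (S : Set (V → ℕ)) : MvPowerSeries ℕ ℚ :=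
  fun d => ((S ∩ weight ⁻¹' {d}).ncard : ℚ)

theorem coeff_genFun (S : Set (V → ℕ)) (d : ℕ →₀ ℕ) :
    MvPowerSeries.coeff d (genFun S) = ((S ∩ weight ⁻¹' {d}).ncard : ℚ) := rfl

theorem genFun_inter_add_genFun_sdiff (S T : Set (V → ℕ)) :
    genFun (S ∩ T) + genFun (S \ T) = genFun S := by
  ext d
  simp only [map_add, coeff_genFun, Set.inter_right_comm _ T, ← Set.inter_sdiff_right_comm]
  exact_mod_cast Set.ncard_inter_add_ncard_sdiff_eq_ncard _ _
    ((finite_weight_preimage d).inter_of_right S)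

theorem genFun_preimage_comp_equiv (e : V ≃ W) (S : Set (V → ℕ)) :
    genFun ((· ∘ e) ⁻¹' S) = genFun S := by
  ext d
  have hw : ((· ∘ e) ⁻¹' S ∩ weight ⁻¹' {d} : Set (W → ℕ)) =
      (· ∘ e) ⁻¹' (S ∩ weight ⁻¹' {d}) := by
    ext κ
    simp [weight_comp_equiv]
  rw [coeff_genFun, coeff_genFun, hw, Set.ncard_preimage_of_injective_subset_range
    (f := fun κ : W → ℕ => κ ∘ e) (e.arrowCongr (Equiv.refl ℕ)).symm.injective]
  exact fun κ _ => ⟨κ ∘ e.symm, by ext; simp⟩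

theorem genFun_sum_type (S : Set (V → ℕ)) (T : Set (W → ℕ)) :
    genFun {κ : V ⊕ W → ℕ | κ ∘ Sum.inl ∈ S ∧ κ ∘ Sum.inr ∈ T} = genFun S * genFun T := by
  ext d
  set A := fun e : ℕ →₀ ℕ => S ∩ weight ⁻¹' {e}
  set B := fun e : ℕ →₀ ℕ => T ∩ weight ⁻¹' {e}
  have splitting : ↥({κ : V ⊕ W → ℕ | κ ∘ Sum.inl ∈ S ∧ κ ∘ Sum.inr ∈ T} ∩ weight ⁻¹' {d}) ≃
      Σ p : antidiagonal d, ↥(A p.1.1 ×ˢ B p.1.2) :=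
    { toFun := fun κ => ⟨⟨(weight (κ.1 ∘ Sum.inl), weight (κ.1 ∘ Sum.inr)), by
          rw [HasAntidiagonal.mem_antidiagonal, ← weight_sum_type]; exact κ.2.2⟩,
        ⟨(κ.1 ∘ Sum.inl, κ.1 ∘ Sum.inr), ⟨κ.2.1.1, rfl⟩, ⟨κ.2.1.2, rfl⟩⟩⟩
      invFun := fun x => ⟨Sum.elim x.2.1.1 x.2.1.2, ⟨x.2.2.1.1, x.2.2.2.1⟩, by
          have hw : weight x.2.1.1 + weight x.2.1.2 = d := by
            rw [x.2.2.1.2, x.2.2.2.2]; exact HasAntidiagonal.mem_antidiagonal.1 x.1.2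
          simpa [Set.mem_preimage, weight_sum_type] using hw⟩
      left_inv := fun κ => Subtype.ext (Sum.elim_comp_inl_inr κ.1)
      right_inv := fun x => Sigma.subtype_ext
        (Subtype.ext (Prod.ext x.2.2.1.2 x.2.2.2.2)) rfl }
  have hfin : ∀ e, (A e).Finite := fun e => (finite_weight_preimage e).inter_of_right S
  have hfin' : ∀ e, (B e).Finite := fun e => (finite_weight_preimage e).inter_of_right T
  rw [coeff_genFun, MvPowerSeries.coeff_mul, ← Nat.card_coe_set_eq, Nat.card_congr splitting]
  have : ∀ p : antidiagonal d, Finite ↥(A p.1.1 ×ˢ B p.1.2) :=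
    fun p => ((hfin _).prod (hfin' _)).to_subtype
  rw [Nat.card_sigma, Nat.cast_sum, ← Finset.sum_coe_sort (antidiagonal d)]
  refine Fintype.sum_congr _ _ fun p => ?_
  rw [Nat.card_coe_set_eq, Set.ncard_prod, Nat.cast_mul]
  rfl

end Weight

section ProperColorings

variable {V W : Type}

def properColorings (G : SimpleGraph V) : Set (V → ℕ) := {κ | ∀ ⦃u v⦄, G.Adj u v → κ u ≠ κ v}

theorem properColorings_sup (G H : SimpleGraph V) :
    properColorings (G ⊔ H) = properColorings G ∩ properColorings H := by
  ext κ
  simp only [properColorings, sup_adj, Set.mem_ofPred_eq, Set.mem_inter_iff]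
  exact ⟨fun h => ⟨fun u v huv => h (.inl huv), fun u v huv => h (.inr huv)⟩,
    fun h u v huv => huv.elim (fun a => h.1 a) (fun a => h.2 a)⟩

theorem properColorings_edge {u v : V} (h : u ≠ v) :
    properColorings (edge u v) = {κ | κ u = κ v}ᶜ := by
  ext κ
  simp only [properColorings, edge_adj, Set.mem_ofPred_eq, Set.mem_compl_iff]
  refine ⟨fun hκ => hκ ⟨.inl ⟨rfl, rfl⟩, h⟩, ?_⟩
  rintro hκ a b ⟨⟨rfl, rfl⟩ | ⟨rfl, rfl⟩, -⟩
  exacts [hκ, Ne.symm hκ]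

theorem properColorings_sum (G : SimpleGraph V) (H : SimpleGraph W) :
    properColorings (G ⊕g H) =
      {κ | κ ∘ Sum.inl ∈ properColorings G ∧ κ ∘ Sum.inr ∈ properColorings H} := by
  ext κ
  refine ⟨fun hκ => ⟨fun u v huv => hκ (sum_adj_inl.2 huv),
    fun u v huv => hκ (sum_adj_inr.2 huv)⟩, ?_⟩
  rintro ⟨hG, hH⟩ (u | u) (v | v) huv
  · exact hG (sum_adj_inl.1 huv)
  · simp at huv
  · simp at huv
  · exact hH (sum_adj_inr.1 huv)

theorem preimage_comp_properColorings {G : SimpleGraph V} {H : SimpleGraph W} (e : G ≃g H) :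
    (· ∘ e) ⁻¹' properColorings G = properColorings H := by
  ext κ
  refine ⟨fun hκ u v huv => ?_, fun hκ u v huv => hκ (e.map_adj_iff.2 huv)⟩
  simpa using hκ (e.symm.map_adj_iff.2 huv)

theorem mem_properColorings_of_sup_edge_eq {G G' : SimpleGraph V} {u v w : V} (hG : G.Adj w u)
    (hwv : w ≠ v) (h : G ⊔ edge w v = G' ⊔ edge w u) {κ : V → ℕ} (hκ : κ ∈ properColorings G)
    (huv : κ u = κ v) : κ ∈ properColorings G' := by
  have : κ ∈ properColorings (G ⊔ edge w v) := by
    rw [properColorings_sup, properColorings_edge hwv]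
    exact ⟨hκ, fun hwv' => hκ hG (hwv'.trans huv.symm)⟩
  rw [h, properColorings_sup] at this
  exact this.1

end ProperColorings

section Csf

variable {V W : Type} [Fintype V] [Fintype W]

theorem csf_eq_genFun (G : SimpleGraph V) : csf G = genFun (properColorings G) := by
  ext d
  rw [coeff_genFun, MvPowerSeries.coeff_apply, csf, ← Nat.card_coe_set_eq]
  congr 1
  refine Nat.card_congr (Equiv.subtypeEquivRight fun κ => and_congr Iff.rfl ?_)
  simp only [Set.mem_preimage, Set.mem_singleton_iff, Finsupp.ext_iff, weight_apply, eq_comm]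

theorem csf_congr {G : SimpleGraph V} {H : SimpleGraph W} (e : G ≃g H) : csf G = csf H := by
  rw [csf_eq_genFun, csf_eq_genFun, ← preimage_comp_properColorings e]
  exact (genFun_preimage_comp_equiv e.toEquiv _).symm

theorem csf_sum (G : SimpleGraph V) (H : SimpleGraph W) : csf (G ⊕g H) = csf G * csf H := by
  rw [csf_eq_genFun, csf_eq_genFun, csf_eq_genFun, properColorings_sum, genFun_sum_type]

/-- For nonadjacent `u`, `v` this is the chromatic symmetric function of the contraction
`G / uv`. -/
def csfSameColor (G : SimpleGraph V) (u v : V) : MvPowerSeries ℕ ℚ :=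
  genFun (properColorings G ∩ {κ | κ u = κ v})

theorem csf_sup_edge (G : SimpleGraph V) {u v : V} (h : u ≠ v) :
    csf (G ⊔ edge u v) = csf G - csfSameColor G u v := by
  rw [csf_eq_genFun, csf_eq_genFun, properColorings_sup, properColorings_edge h, ← Set.sdiff_eq,
    csfSameColor, ← genFun_inter_add_genFun_sdiff (properColorings G) {κ | κ u = κ v},
    add_sub_cancel_left]

theorem csfSameColor_eq_zero_of_adj {G : SimpleGraph V} {u v : V} (h : G.Adj u v) :
    csfSameColor G u v = 0 := by
  have : properColorings G ∩ {κ | κ u = κ v} = ∅ :=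
    Set.eq_empty_iff_forall_notMem.2 fun κ hκ => hκ.1 h hκ.2
  ext d
  simp [csfSameColor, coeff_genFun, this]

theorem csfSameColor_congr {G : SimpleGraph V} {H : SimpleGraph W} (e : G ≃g H) (u v : V) :
    csfSameColor H (e u) (e v) = csfSameColor G u v := by
  rw [csfSameColor, csfSameColor, ← genFun_preimage_comp_equiv e.toEquiv]
  exact congrArg genFun
    (congrArg (· ∩ {κ | κ (e u) = κ (e v)}) (preimage_comp_properColorings e)).symm

-- Once `κ u = κ v`, the edges `w u` and `w v` impose the same constraint.
theorem csfSameColor_eq_of_sup_edge_eq {G G' : SimpleGraph V} {u v w : V} (hG : G.Adj w u)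
    (hG' : G'.Adj w v) (h : G ⊔ edge w v = G' ⊔ edge w u) :
    csfSameColor G u v = csfSameColor G' u v := by
  refine congrArg genFun (Set.ext fun κ => ?_)
  exact ⟨fun hκ => ⟨mem_properColorings_of_sup_edge_eq hG hG'.ne h hκ.1 hκ.2, hκ.2⟩,
    fun hκ => ⟨mem_properColorings_of_sup_edge_eq hG' hG.ne h.symm hκ.1 hκ.2.symm, hκ.2⟩⟩

end Csf

-- Vertices are written as casts `((i : ℕ) : Fin N)`, which reduce `i` mod `N`; below always `i < N`.
open Fin.NatCast

variable {N : ℕ}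

/-- The tadpole `T_{N-s, s}`, numbered from the free end of its tail. -/
def revTadpole (N s : ℕ) : SimpleGraph (Fin N) :=
  fromRel fun i j => (j : ℕ) = i + 1 ∨ ((i : ℕ) = s ∧ (j : ℕ) = N - 1)

/-- `revTadpole N s` with the edge `{q-1, q}` replaced by the chord `{0, q-1}`, i.e.
`C_q ⊔ T_{N-s, s-q}`. -/
def cycleAndRevTadpole (N s q : ℕ) : SimpleGraph (Fin N) :=
  fromRel fun i j => ((j : ℕ) = i + 1 ∧ (j : ℕ) ≠ q) ∨ ((i : ℕ) = 0 ∧ (j : ℕ) = q - 1)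
    ∨ ((i : ℕ) = s ∧ (j : ℕ) = N - 1)

theorem cycleG_eq_fromRel (q : ℕ) :
    cycleG q = fromRel fun i j : Fin q => (j : ℕ) = i + 1 ∨ ((i : ℕ) = 0 ∧ (j : ℕ) = q - 1) := by
  ext a b
  have wrap : ∀ i : Fin q, ((i : ℕ) + 1) % q = if (i : ℕ) + 1 < q then (i : ℕ) + 1 else 0 := by
    intro i
    split_ifs with h
    · exact Nat.mod_eq_of_lt h
    · rw [show (i : ℕ) + 1 = q by omega, Nat.mod_self]
  simp only [cycleG, fromRel_adj, ne_eq, Fin.ext_iff, wrap]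
  split_ifs <;> omega

theorem revTadpole_adj_of_val_eq_succ {s : ℕ} {i j : Fin N} (h : (j : ℕ) = i + 1) :
    (revTadpole N s).Adj i j :=
  (fromRel_adj _ _ _).2 ⟨fun hij => by rw [hij] at h; omega, .inl (.inl h)⟩

theorem cycleAndRevTadpole_adj_chord {s q : ℕ} {i j : Fin N} (hi : (i : ℕ) = 0)
    (hj : (j : ℕ) = q - 1) (hq : 2 ≤ q) : (cycleAndRevTadpole N s q).Adj i j :=
  (fromRel_adj _ _ _).2 ⟨fun hij => by rw [hij] at hi; omega, .inl (.inr (.inl ⟨hi, hj⟩))⟩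

def tadpoleIsoRevTadpole {n s : ℕ} (hN : n + s = N) : tadpole n s ≃g revTadpole N s :=
  ⟨Fin.revPerm.trans (finCongr hN), fun {a b} => by
    simp only [tadpole, revTadpole, fromRel_adj, ne_eq, Fin.ext_iff, Equiv.trans_apply,
      Fin.revPerm_apply, finCongr_apply, Fin.val_cast, Fin.val_rev]
    omega⟩

def tadpoleSumCycleIsoCycleAndRevTadpole {n s q : ℕ} (hqs : q ≤ s) (hN : n + s = N) :
    tadpole n (s - q) ⊕g cycleG q ≃g cycleAndRevTadpole N s q :=
  ⟨((Equiv.sumCongr Fin.revPerm (Equiv.refl _)).trans (Equiv.sumComm _ _)).trans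
      (finSumFinEquiv.trans (finCongr (by omega))), fun {a b} => by
    rw [cycleG_eq_fromRel]
    rcases a with a | a <;> rcases b with b | b <;>
    simp only [tadpole, cycleAndRevTadpole, fromRel_adj, ne_eq, Fin.ext_iff, Equiv.trans_apply,
      Equiv.sumCongr_apply, Sum.map_inl, Sum.map_inr, Equiv.sumComm_apply, Sum.swap_inl,
      Sum.swap_inr, finSumFinEquiv_apply_left, finSumFinEquiv_apply_right, Fin.revPerm_apply,
      Equiv.refl_apply, finCongr_apply, Fin.val_cast, Fin.val_rev, Fin.val_castAdd, Fin.val_natAdd,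
      SimpleGraph.sum_adj, iff_false] <;> omega⟩

theorem dumbbellAux_eq_revTadpole_sup_edge {m n t : ℕ} [NeZero (m + n + t - 1)] (hm : 2 ≤ m)
    (hn : 1 ≤ n) :
    dumbbellAux m n t = revTadpole (m + n + t - 1) (m + t - 1) ⊔ edge 0 ((m - 1 : ℕ) : Fin _) := by
  have hv : (((m - 1 : ℕ) : Fin (m + n + t - 1)) : ℕ) = m - 1 := Fin.val_cast_of_lt (by omega)
  ext a b
  simp only [dumbbellAux, revTadpole, sup_adj, fromRel_adj, edge_adj, Fin.ext_iff, hv, Fin.val_zero]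
  omega

section

variable [NeZero N]

theorem val_cycleRange (c i : Fin N) :
    (c.cycleRange i : ℕ) =
      if (i : ℕ) < c then (i : ℕ) + 1 else if (i : ℕ) = c then 0 else (i : ℕ) := by
  rcases lt_trichotomy i c with h | rfl | h
  · rw [Fin.coe_cycleRange_of_le h.le, if_neg h.ne, if_pos (Fin.lt_def.1 h)]
  · simp
  · rw [Fin.cycleRange_of_gt h, if_neg (by omega), if_neg (by omega)]

theorem cycleAndRevTadpole_sup_edge {s q : ℕ} (hq : q < N) :
    cycleAndRevTadpole N s q ⊔ edge ((q - 1 : ℕ) : Fin N) q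
      = revTadpole N s ⊔ edge ((q - 1 : ℕ) : Fin N) 0 := by
  have hv : (((q - 1 : ℕ) : Fin N) : ℕ) = q - 1 := Fin.val_cast_of_lt (by omega)
  have hv' : (((q : ℕ) : Fin N) : ℕ) = q := Fin.val_cast_of_lt hq
  ext a b
  simp only [cycleAndRevTadpole, revTadpole, sup_adj, fromRel_adj, edge_adj, Fin.ext_iff, hv, hv',
    Fin.val_zero]
  omega

-- Rotating the cycle `0, …, q-1` one step is an automorphism sending `q-1` to `0` and fixing `q`.
theorem csfSameColor_cycleAndRevTadpole_rotate {s q : ℕ} (hq : 1 ≤ q) (hqs : q ≤ s) (hs : s < N) :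
    csfSameColor (cycleAndRevTadpole N s q) ((q - 1 : ℕ) : Fin N) q
      = csfSameColor (cycleAndRevTadpole N s q) 0 q := by
  set c : Fin N := ((q - 1 : ℕ) : Fin N)
  have hc : (c : ℕ) = q - 1 := Fin.val_cast_of_lt (by omega)
  have hq' : (((q : ℕ) : Fin N) : ℕ) = q := Fin.val_cast_of_lt (by omega)
  let ρ : cycleAndRevTadpole N s q ≃g cycleAndRevTadpole N s q :=
    ⟨c.cycleRange, fun {a b} => by
      simp only [cycleAndRevTadpole, fromRel_adj, ne_eq, Fin.ext_iff, val_cycleRange, hc]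
      split_ifs <;> grind⟩
  have hρq : ρ q = q := Fin.cycleRange_of_gt (by rw [Fin.lt_def, hc, hq']; omega)
  rw [← csfSameColor_congr ρ, hρq]
  congr 2
  exact Fin.cycleRange_self c

theorem csf_cycleAndRevTadpole {s q : ℕ} (hq : 2 ≤ q) (hqs : q ≤ s) (hs : s < N) :
    csf (cycleAndRevTadpole N s q) = csf (revTadpole N s)
      - csfSameColor (revTadpole N s) 0 ((q - 1 : ℕ) : Fin N)
      + csfSameColor (revTadpole N s) 0 (q : Fin N) := by
  have hv : (((q - 1 : ℕ) : Fin N) : ℕ) = q - 1 := Fin.val_cast_of_lt (by omega)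
  have hv' : ((q : Fin N) : ℕ) = q := Fin.val_cast_of_lt (a := q) (by omega)
  have h0 : ((0 : Fin N) : ℕ) = 0 := Fin.val_zero N
  have hsup := cycleAndRevTadpole_sup_edge (s := s) (by omega : q < N)
  have hadjH : (cycleAndRevTadpole N s q).Adj ((q - 1 : ℕ) : Fin N) 0 :=
    (cycleAndRevTadpole_adj_chord h0 hv hq).symm
  have hadjT : (revTadpole N s).Adj ((q - 1 : ℕ) : Fin N) q :=
    revTadpole_adj_of_val_eq_succ (by rw [hv, hv']; omega)
  have hH := csf_sup_edge (cycleAndRevTadpole N s q) hadjT.ne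
  have hT := csf_sup_edge (revTadpole N s) hadjH.ne.symm
  rw [hsup, edge_comm, hT, csfSameColor_cycleAndRevTadpole_rotate (by omega) hqs hs,
    csfSameColor_eq_of_sup_edge_eq hadjH hadjT hsup] at hH
  rw [hH]
  abel

theorem csf_revTadpole_sup_edge_eq_sum {m s : ℕ} (hm : 2 ≤ m) (hms : m ≤ s + 1) (hs : s < N) :
    csf (revTadpole N s ⊔ edge 0 ((m - 1 : ℕ) : Fin N))
      = ((m - 1 : ℕ) : MvPowerSeries ℕ ℚ) * csf (revTadpole N s)
        - ∑ q ∈ Ico 2 m, csf (cycleAndRevTadpole N s q) := by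
  set c : ℕ → MvPowerSeries ℕ ℚ := fun q => csfSameColor (revTadpole N s) 0 ((q - 1 : ℕ) : Fin N)
  have hc2 : c 2 = 0 := by
    have h1 : (((2 - 1 : ℕ) : Fin N) : ℕ) = 1 := Fin.val_cast_of_lt (by omega)
    exact csfSameColor_eq_zero_of_adj (revTadpole_adj_of_val_eq_succ (by rw [h1, Fin.val_zero]))
  have hsum : ∑ q ∈ Ico 2 m, csf (cycleAndRevTadpole N s q)
      = ∑ q ∈ Ico 2 m, (csf (revTadpole N s) + (c (q + 1) - c q)) := by
    refine sum_congr rfl fun q hq => ?_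
    rw [mem_Ico] at hq
    rw [csf_cycleAndRevTadpole hq.1 (by omega) hs]
    simp only [c, Nat.add_sub_cancel]
    abel
  have hD := csf_sup_edge (revTadpole N s) (u := 0) (v := ((m - 1 : ℕ) : Fin N)) (by
    rw [ne_eq, Fin.ext_iff, Fin.val_zero, Fin.val_cast_of_lt (by omega)]; omega)
  have hm1 : ((m - 1 : ℕ) : MvPowerSeries ℕ ℚ) = ((m - 2 : ℕ) : MvPowerSeries ℕ ℚ) + 1 := by
    rw [← Nat.cast_succ]; congr 1; omega
  rw [hsum, sum_add_distrib, sum_Ico_sub c (by omega), hc2, sum_const, Nat.card_Ico, nsmul_eq_mul,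
    hD, hm1]
  ring

end

end

end ChromaticSymmetric

open ChromaticSymmetric in
/-- For `m, n ≥ 3` and `l ≥ -1`:
`X_{D(m,l,n)} = (m-1)·X_{T_{n,m+l}} - Σ_{k=1}^{m-2} X_{T_{n,l+k}}·X_{C_{m-k}}`,
where `T_{n,0}` is identified with `C_n` and `C_2` with `P_2` (as they are in the
definitions of `tadpole` and `cycleG`). -/
theorem dumbbell_tadpole_expansion (m n : ℕ) (l : ℤ) (hm : 3 ≤ m) (hn : 3 ≤ n)
    (hl : -1 ≤ l) :
    csf (dumbbell m n l) =
      ((m - 1 : ℕ) : MvPowerSeries ℕ ℚ) * csf (tadpole n ((m : ℤ) + l).toNat)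
        - ∑ k ∈ Finset.Icc 1 (m - 2),
            csf (tadpole n (l + (k : ℤ)).toNat) * csf (cycleG (m - k)) := by
  rw [dumbbell]
  set t := (l + 1).toNat with ht
  have : NeZero (m + n + t - 1) := ⟨by omega⟩
  have hL : ((m : ℤ) + l).toNat = m + t - 1 := by omega
  have hterm : ∀ k ∈ Finset.Icc 1 (m - 2),
      csf (tadpole n (l + (k : ℤ)).toNat) * csf (cycleG (m - k))
      = csf (cycleAndRevTadpole (m + n + t - 1) (m + t - 1) (m - k)) := by
    intro k hk
    rw [Finset.mem_Icc] at hk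
    rw [show (l + (k : ℤ)).toNat = m + t - 1 - (m - k) by omega, ← csf_sum]
    exact csf_congr (tadpoleSumCycleIsoCycleAndRevTadpole (by omega) (by omega))
  have hreflect : ∑ k ∈ Finset.Icc 1 (m - 2),
      csf (cycleAndRevTadpole (m + n + t - 1) (m + t - 1) (m - k))
      = ∑ q ∈ Finset.Ico 2 m, csf (cycleAndRevTadpole (m + n + t - 1) (m + t - 1) q) := by
    rw [← Finset.Ico_add_one_right_eq_Icc, Finset.sum_Ico_reflect
      (fun q => csf (cycleAndRevTadpole (m + n + t - 1) (m + t - 1) q)) 1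
      (by omega : m - 2 + 1 ≤ m + 1),
      show m + 1 - (m - 2 + 1) = 2 by omega, Nat.add_sub_cancel]
  rw [dumbbellAux_eq_revTadpole_sup_edge (by omega) (by omega),
    csf_revTadpole_sup_edge_eq_sum (by omega) (by omega) (by omega), hL,
    csf_congr (tadpoleIsoRevTadpole (N := m + n + t - 1) (by omega)), Finset.sum_congr rfl hterm,
    hreflect]
end
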